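/- arXiv:2308.03075 — 8 statements merged into one kernel-verified Lean document; each statement's English description precedes it below -/
import Mathlib

section
/- Let X be a nonempty finite multiset of positive integers and let δ ≥ 1 and 0 < α ≤ δ/16 be reals. If X is δ-dense, then there exists an integer d ≥ 1 such that the multiset X' := X(d)/d is δ-dense and has no α-almost divisor, and moreover d ≤ 4·μ(X)·Σ(X)/|X|², |X'| ≥ 0.75·|X|, and Σ(X') ≥ 0.75·Σ(X)/d. -/
namespace BW

abbrev mu (X : Multiset ℕ) : ℕ := X.toFinset.sup fun x => X.count x
abbrev mx (X : Multiset ℕ) : ℕ := X.toFinset.sup id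

lemma le_mx {X : Multiset ℕ} {x : ℕ} (hx : x ∈ X) : x ≤ mx X :=
  Finset.le_sup (f := id) (Multiset.mem_toFinset.2 hx)

lemma count_le_mu (X : Multiset ℕ) (v : ℕ) : X.count v ≤ mu X := by
  by_cases h : v ∈ X
  · exact Finset.le_sup (f := fun x => X.count x) (Multiset.mem_toFinset.2 h)
  · simp [Multiset.count_eq_zero.2 h]

lemma msum_le_sum {s t : Multiset ℕ} (h : s ≤ t) : s.sum ≤ t.sum := by
  obtain ⟨u, rfl⟩ := Multiset.le_iff_exists_add.1 h
  simp

lemma card_le_msum {X : Multiset ℕ} (hpos : ∀ x ∈ X, 0 < x) : Multiset.card X ≤ X.sum := by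
  simpa using Multiset.card_nsmul_le_sum (a := 1) hpos

lemma sum_le_card_mul_mx (X : Multiset ℕ) : X.sum ≤ Multiset.card X * mx X := by
  simpa [smul_eq_mul] using Multiset.sum_le_card_nsmul X (mx X) (fun x hx => le_mx hx)

lemma one_le_mu {X : Multiset ℕ} (h : X ≠ 0) : 1 ≤ mu X := by
  obtain ⟨a, ha⟩ := Multiset.exists_mem_of_ne_zero h
  calc 1 ≤ X.count a := Multiset.one_le_count_iff_mem.2 ha
    _ ≤ mu X := count_le_mu X a

lemma one_le_mx {X : Multiset ℕ} (h : X ≠ 0) (hpos : ∀ x ∈ X, 0 < x) : 1 ≤ mx X := by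
  obtain ⟨a, ha⟩ := Multiset.exists_mem_of_ne_zero h
  calc 1 ≤ a := hpos a ha
    _ ≤ mx X := le_mx ha

def xdiv (d : ℕ) (X : Multiset ℕ) : Multiset ℕ :=
  (X.filter fun x => d ∣ x).map (fun x => x / d)

lemma xdiv_one (X : Multiset ℕ) : xdiv 1 X = X := by
  rw [xdiv, Multiset.filter_eq_self.2 fun x _ => one_dvd x,
    Multiset.map_congr rfl (fun x _ => Nat.div_one x), Multiset.map_id']

lemma count_xdiv {d : ℕ} (hd : 0 < d) (X : Multiset ℕ) (v : ℕ) :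
    (xdiv d X).count v = X.count (d * v) := by
  rw [xdiv, Multiset.count_map, Multiset.filter_filter, Multiset.count_eq_card_filter_eq]
  congr 1
  refine Multiset.filter_congr fun x _ => ?_
  constructor
  · rintro ⟨h1, h2⟩
    rw [h1, Nat.mul_div_cancel' h2]
  · rintro rfl
    exact ⟨(Nat.mul_div_cancel_left v hd).symm, dvd_mul_right d v⟩

lemma card_xdiv (d : ℕ) (X : Multiset ℕ) :
    Multiset.card (xdiv d X) = Multiset.card (X.filter fun x => d ∣ x) :=
  Multiset.card_map _ _

lemma sum_xdiv_mul (d : ℕ) (X : Multiset ℕ) :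
    (xdiv d X).sum * d = (X.filter fun x => d ∣ x).sum := by
  rw [xdiv, ← Multiset.sum_map_mul_right,
    Multiset.map_congr rfl (fun x hx => Nat.div_mul_cancel ((Multiset.mem_filter.1 hx).2)),
    Multiset.map_id']

lemma xdiv_pos {d : ℕ} {X : Multiset ℕ} (hd : 0 < d) (hpos : ∀ x ∈ X, 0 < x) :
    ∀ y ∈ xdiv d X, 0 < y := by
  intro y hy
  rw [xdiv, Multiset.mem_map] at hy
  obtain ⟨x, hx, rfl⟩ := hy
  have hx' := Multiset.mem_filter.1 hx
  exact Nat.div_pos (Nat.le_of_dvd (hpos x hx'.1) hx'.2) hd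

lemma xdiv_comp (e d : ℕ) (he : 0 < e) (X : Multiset ℕ) :
    xdiv d (xdiv e X) = xdiv (e * d) X := by
  rw [xdiv, xdiv, Multiset.filter_map, Multiset.map_map, Multiset.filter_filter, xdiv]
  have hpred : ∀ x ∈ X, ((fun y => d ∣ y) ∘ fun x => x / e) x ∧ e ∣ x ↔ e * d ∣ x := by
    intro x _
    simp only [Function.comp]
    constructor
    · rintro ⟨h1, h2⟩
      exact (Nat.dvd_div_iff_mul_dvd h2).1 h1
    · intro h
      have he' : e ∣ x := (dvd_mul_right e d).trans h
      exact ⟨(Nat.dvd_div_iff_mul_dvd he').2 h, he'⟩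
  rw [Multiset.filter_congr hpred]
  exact Multiset.map_congr rfl fun x _ => by
    simp only [Function.comp]
    exact Nat.div_div_eq_div_mul x e d

lemma mu_xdiv_le {d : ℕ} (hd : 0 < d) (X : Multiset ℕ) : mu (xdiv d X) ≤ mu X := by
  apply Finset.sup_le
  intro v _
  rw [count_xdiv hd]
  exact count_le_mu X (d * v)

lemma mul_mx_xdiv_le {d : ℕ} (hd : 0 < d) (X : Multiset ℕ) : d * mx (xdiv d X) ≤ mx X := by
  have h1 : mx (xdiv d X) ≤ mx X / d := by
    apply Finset.sup_le
    intro y hy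
    obtain ⟨x, hx, rfl⟩ := Multiset.mem_map.1 (Multiset.mem_toFinset.1 hy)
    exact Nat.div_le_div_right (le_mx (Multiset.mem_filter.1 hx).1)
  calc d * mx (xdiv d X) ≤ d * (mx X / d) := Nat.mul_le_mul_left d h1
    _ ≤ mx X := Nat.mul_div_le (mx X) d


lemma filter_le_card_bound (Y : Multiset ℕ) (hpos : ∀ x ∈ Y, 0 < x) (μ : ℕ)
    (hμ : ∀ v, Y.count v ≤ μ) : ∀ t, Multiset.card (Y.filter fun x => x ≤ t) ≤ μ * t := by
  intro t
  induction t with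
  | zero =>
      have h : Y.filter (fun x => x ≤ 0) = 0 := by
        rw [Multiset.filter_eq_nil]
        intro x hx
        have := hpos x hx
        omega
      rw [h]
      simp
  | succ t ih =>
      have hsplit := Multiset.filter_add_not (fun x => x ≤ t) (Y.filter fun x => x ≤ t + 1)
      have h1 : (Y.filter fun x => x ≤ t + 1).filter (fun x => x ≤ t) = Y.filter fun x => x ≤ t := by
        rw [Multiset.filter_filter]
        exact Multiset.filter_congr fun x _ => by omega
      have h2 : (Y.filter fun x => x ≤ t + 1).filter (fun x => ¬ x ≤ t) = Y.filter fun x => t + 1 = x := by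
        rw [Multiset.filter_filter]
        exact Multiset.filter_congr fun x _ => by omega
      have hcount : Multiset.card (Y.filter fun x => t + 1 = x) = Y.count (t + 1) :=
        (Multiset.count_eq_card_filter_eq Y (t + 1)).symm
      have hc : Multiset.card (Y.filter fun x => x ≤ t + 1)
          = Multiset.card (Y.filter fun x => x ≤ t) + Y.count (t + 1) := by
        rw [← hcount, ← h1, ← h2, ← Multiset.card_add, hsplit]
      rw [hc]
      have := hμ (t + 1)
      calc Multiset.card (Y.filter fun x => x ≤ t) + Y.count (t + 1) ≤ μ * t + μ := by omega
        _ = μ * (t + 1) := by ring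

lemma sum_ge_aux (Y : Multiset ℕ) (T : ℕ) :
    ∑ t ∈ Finset.range T, Multiset.card (Y.filter fun x => t < x) ≤ Y.sum := by
  induction Y using Multiset.induction with
  | empty => simp
  | cons a Y ih =>
      have hcard : ∀ t : ℕ, Multiset.card ((a ::ₘ Y).filter fun x => t < x)
          = (if t < a then 1 else 0) + Multiset.card (Y.filter fun x => t < x) := by
        intro t
        by_cases h : t < a <;>
          simp [Multiset.filter_cons, h, add_comm]
      calc ∑ t ∈ Finset.range T, Multiset.card ((a ::ₘ Y).filter fun x => t < x)
          = ∑ t ∈ Finset.range T, ((if t < a then 1 else 0) + Multiset.card (Y.filter fun x => t < x)) :=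
            Finset.sum_congr rfl fun t _ => hcard t
        _ = (∑ t ∈ Finset.range T, if t < a then 1 else 0)
            + ∑ t ∈ Finset.range T, Multiset.card (Y.filter fun x => t < x) :=
            Finset.sum_add_distrib
        _ ≤ a + Y.sum := by
            refine add_le_add ?_ ih
            rw [← Finset.card_filter]
            calc ((Finset.range T).filter fun t => t < a).card ≤ (Finset.range a).card :=
                  Finset.card_le_card (fun t ht => by
                    simp only [Finset.mem_filter, Finset.mem_range] at ht ⊢
                    exact ht.2)
              _ = a := Finset.card_range a
        _ = (a ::ₘ Y).sum := (Multiset.sum_cons a Y).symm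

lemma lemA (Y : Multiset ℕ) (hpos : ∀ x ∈ Y, 0 < x) (μ : ℕ) (hμ1 : 1 ≤ μ)
    (hμ : ∀ v, Y.count v ≤ μ) : (Multiset.card Y) ^ 2 ≤ 2 * μ * Y.sum := by
  set n := Multiset.card Y with hn
  have hsplit : ∀ t : ℕ, n ≤ μ * t + Multiset.card (Y.filter fun x => t < x) := by
    intro t
    have h := Multiset.filter_add_not (fun x => x ≤ t) Y
    have h2 : (Y.filter fun x => ¬ x ≤ t) = Y.filter fun x => t < x :=
      Multiset.filter_congr fun x _ => by omega
    have hc : n = Multiset.card (Y.filter fun x => x ≤ t)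
        + Multiset.card (Y.filter fun x => t < x) := by
      rw [← h2, ← Multiset.card_add, h]
    have := filter_le_card_bound Y hpos μ hμ t
    omega
  set q := n / μ with hqdef
  have hq : μ * q + n % μ = n := Nat.div_add_mod n μ
  have hr : n % μ < μ := Nat.mod_lt _ hμ1
  have hsum := sum_ge_aux Y (q + 1)
  have hT : (q + 1) * n ≤ μ * (∑ t ∈ Finset.range (q + 1), t) + Y.sum := by
    calc (q + 1) * n = ∑ _t ∈ Finset.range (q + 1), n := by
          rw [Finset.sum_const, Finset.card_range, smul_eq_mul]
      _ ≤ ∑ t ∈ Finset.range (q + 1), (μ * t + Multiset.card (Y.filter fun x => t < x)) :=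
          Finset.sum_le_sum fun t _ => hsplit t
      _ = μ * (∑ t ∈ Finset.range (q + 1), t)
          + ∑ t ∈ Finset.range (q + 1), Multiset.card (Y.filter fun x => t < x) := by
          rw [Finset.sum_add_distrib, Finset.mul_sum]
      _ ≤ _ := add_le_add_right hsum _
  have hgauss : (∑ t ∈ Finset.range (q + 1), t) * 2 = (q + 1) * q := by
    rw [Finset.sum_range_id_mul_two]; simp
  set G := ∑ t ∈ Finset.range (q + 1), t with hG
  set r := n % μ with hrdef
  set S := Y.sum with hS
  have key : 2 * μ * ((q + 1) * n) ≤ μ * ((q + 1) * q) * μ + 2 * μ * S := by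
    calc 2 * μ * ((q + 1) * n) ≤ 2 * μ * (μ * G + S) := Nat.mul_le_mul_left _ hT
      _ = μ * (G * 2) * μ + 2 * μ * S := by ring
      _ = μ * ((q + 1) * q) * μ + 2 * μ * S := by rw [hgauss]
  have hrr : (r + 1) * r ≤ μ * r := Nat.mul_le_mul_right r hr
  nlinarith [hq, key, hrr, sq_nonneg (μ * q), Nat.zero_le q, Nat.zero_le r]


lemma A_le {X : Multiset ℕ} (hne : X ≠ 0) (hpos : ∀ x ∈ X, 0 < x)
    {δ α : ℝ} (hδ : 1 ≤ δ) (hα0 : 0 < α) (hαδ : α ≤ δ / 16)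
    (hdense : ((Multiset.card X : ℝ)) ^ 2 ≥ δ * mu X * mx X) :
    α * mu X * X.sum / ((Multiset.card X : ℝ)) ^ 2 ≤ (Multiset.card X : ℝ) / 16 := by
  have hcard1 : 1 ≤ Multiset.card X := Multiset.card_pos.2 hne
  have hn1 : (1:ℝ) ≤ (Multiset.card X : ℝ) := by exact_mod_cast hcard1
  have hn0 : (0:ℝ) < (Multiset.card X : ℝ) := by linarith
  have hμ0 : (0:ℝ) ≤ (mu X : ℝ) := Nat.cast_nonneg _
  have hS0 : (0:ℝ) ≤ (X.sum : ℝ) := Nat.cast_nonneg _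
  have hm0 : (0:ℝ) ≤ (mx X : ℝ) := Nat.cast_nonneg _
  have hSnm : (X.sum : ℝ) ≤ (Multiset.card X : ℝ) * (mx X : ℝ) := by
    exact_mod_cast sum_le_card_mul_mx X
  have h1 : α * ((mu X : ℝ) * (X.sum : ℝ)) ≤ δ / 16 * ((mu X : ℝ) * (X.sum : ℝ)) :=
    mul_le_mul_of_nonneg_right hαδ (mul_nonneg hμ0 hS0)
  have h2 : (mu X : ℝ) * (X.sum : ℝ) ≤ (mu X : ℝ) * ((Multiset.card X : ℝ) * (mx X : ℝ)) :=
    mul_le_mul_of_nonneg_left hSnm hμ0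
  have h3 : δ / 16 * ((mu X:ℝ) * ((Multiset.card X:ℝ) * (mx X:ℝ)))
      = (Multiset.card X:ℝ) / 16 * (δ * (mu X:ℝ) * (mx X:ℝ)) := by ring
  have h4 : (Multiset.card X:ℝ) / 16 * (δ * (mu X:ℝ) * (mx X:ℝ))
      ≤ (Multiset.card X:ℝ) / 16 * ((Multiset.card X:ℝ))^2 :=
    mul_le_mul_of_nonneg_left hdense (by positivity)
  have h5 : α * (mu X:ℝ) * (X.sum:ℝ) ≤ (Multiset.card X:ℝ)/16 * ((Multiset.card X:ℝ))^2 := by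
    have hδ0 : (0:ℝ) ≤ δ / 16 := by linarith
    nlinarith [mul_le_mul_of_nonneg_left h2 hδ0]
  rw [div_le_div_iff₀ (by positivity) (by norm_num : (0:ℝ) < 16)]
  nlinarith [h5]

lemma key (N : ℕ) : ∀ X : Multiset ℕ, X.sum ≤ N → X ≠ 0 → (∀ x ∈ X, 0 < x) →
    ∀ δ α : ℝ, 1 ≤ δ → 0 < α → α ≤ δ / 16 →
    ((Multiset.card X : ℝ)) ^ 2 ≥ δ * mu X * mx X →
    ∃ d : ℕ, 1 ≤ d ∧
      ((Multiset.card (xdiv d X) : ℝ)) ^ 2 ≥ δ * mu (xdiv d X) * mx (xdiv d X) ∧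
      (∀ e : ℕ, 1 < e →
        ¬ (((Multiset.card ((xdiv d X).filter fun x => ¬ e ∣ x) : ℝ)) ≤
            α * mu (xdiv d X) * (xdiv d X).sum / ((Multiset.card (xdiv d X) : ℝ)) ^ 2)) ∧
      (Multiset.card (xdiv d X) : ℝ) ≥ (Multiset.card X : ℝ)
        - 5 / 2 * (α * mu X * X.sum / ((Multiset.card X : ℝ)) ^ 2) ∧
      (d : ℝ) * ((xdiv d X).sum : ℝ) ≥ (X.sum : ℝ)
        - 5 / 2 * (α * mu X * X.sum * mx X / ((Multiset.card X : ℝ)) ^ 2) := by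
  induction N with
  | zero =>
      intro X hsum hne hpos
      exfalso
      have h1 : 1 ≤ Multiset.card X := Multiset.card_pos.2 hne
      have h2 := card_le_msum hpos
      omega
  | succ N ih =>
      intro X hsumN hne hpos δ α hδ hα0 hαδ hdense
      have hcard1 : 1 ≤ Multiset.card X := Multiset.card_pos.2 hne
      have hn0 : (0:ℝ) < (Multiset.card X : ℝ) := by exact_mod_cast hcard1
      have hn2 : (0:ℝ) < ((Multiset.card X : ℝ))^2 := by positivity
      have hμ0 : (0:ℝ) < (mu X : ℝ) := by exact_mod_cast one_le_mu hne
      have hm0 : (0:ℝ) < (mx X : ℝ) := by exact_mod_cast one_le_mx hne hpos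
      have hSn : Multiset.card X ≤ X.sum := card_le_msum hpos
      have hS0 : (0:ℝ) < (X.sum : ℝ) := by
        have : 1 ≤ X.sum := le_trans hcard1 hSn
        exact_mod_cast this
      set A : ℝ := α * mu X * X.sum / ((Multiset.card X : ℝ)) ^ 2 with hAdef
      clear_value A
      have hA0 : 0 ≤ A := by rw [hAdef]; positivity
      have hA16 : A ≤ (Multiset.card X : ℝ) / 16 := by
        rw [hAdef]; exact A_le hne hpos hδ hα0 hαδ hdense
      by_cases hAD : ∃ e : ℕ, 1 < e ∧
          ((Multiset.card (X.filter fun x => ¬ e ∣ x) : ℝ)) ≤ A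
      · obtain ⟨e, he1, hADe⟩ := hAD
        have he0 : 0 < e := by omega
        have he2 : 2 ≤ e := he1
        set Y := xdiv e X with hYdef
        clear_value Y
        -- cardinalities
        have hsplitc : Multiset.card X = Multiset.card (X.filter fun x => e ∣ x)
            + Multiset.card (X.filter fun x => ¬ e ∣ x) := by
          rw [← Multiset.card_add, Multiset.filter_add_not]
        have hcardYeq : (Multiset.card Y : ℝ)
            = (Multiset.card X : ℝ) - (Multiset.card (X.filter fun x => ¬ e ∣ x) : ℝ) := by
          rw [hYdef, card_xdiv]
          have : (Multiset.card (X.filter fun x => e ∣ x) : ℝ)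
              + (Multiset.card (X.filter fun x => ¬ e ∣ x) : ℝ) = (Multiset.card X : ℝ) := by
            exact_mod_cast hsplitc.symm
          linarith only [this]
        have hcardYge : (Multiset.card Y : ℝ) ≥ (Multiset.card X : ℝ) - A := by
          rw [hcardYeq]; linarith only [hADe]
        have hcardY15 : (Multiset.card Y : ℝ) ≥ 15/16 * (Multiset.card X : ℝ) := by
          linarith only [hcardYge, hA16]
        have hcY0 : (0:ℝ) < (Multiset.card Y : ℝ) := by
          linarith only [hcardY15, hn0]
        have hcY2 : (0:ℝ) < ((Multiset.card Y : ℝ))^2 := by positivity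
        have hY0 : Y ≠ 0 := by
          intro h
          rw [h] at hcY0
          simp at hcY0
        have hYpos : ∀ y ∈ Y, 0 < y := by
          rw [hYdef]; exact xdiv_pos he0 hpos
        have hμY : (mu Y : ℝ) ≤ (mu X : ℝ) := by
          rw [hYdef]; exact_mod_cast mu_xdiv_le he0 X
        have hμY0 : (0:ℝ) ≤ (mu Y : ℝ) := Nat.cast_nonneg _
        have hmxY0 : (0:ℝ) ≤ (mx Y : ℝ) := Nat.cast_nonneg _
        have hemxY : (e:ℝ) * (mx Y : ℝ) ≤ (mx X : ℝ) := by
          rw [hYdef]; exact_mod_cast mul_mx_xdiv_le he0 X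
        have he2' : (2:ℝ) ≤ (e:ℝ) := by exact_mod_cast he2
        have hmxY2 : (mx Y : ℝ) ≤ (mx X : ℝ) / 2 := by
          have h := mul_le_mul_of_nonneg_right he2' hmxY0
          linarith only [h, hemxY]
        -- sums
        have hsum_split : (X.sum : ℝ) = ((X.filter fun x => e ∣ x).sum : ℝ)
            + ((X.filter fun x => ¬ e ∣ x).sum : ℝ) := by
          have : X.sum = (X.filter fun x => e ∣ x).sum + (X.filter fun x => ¬ e ∣ x).sum := by
            rw [← Multiset.sum_add, Multiset.filter_add_not]
          exact_mod_cast this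
        have hnotsum : ((X.filter fun x => ¬ e ∣ x).sum : ℝ)
            ≤ (Multiset.card (X.filter fun x => ¬ e ∣ x) : ℝ) * (mx X : ℝ) := by
          have : (X.filter fun x => ¬ e ∣ x).sum
              ≤ Multiset.card (X.filter fun x => ¬ e ∣ x) * mx X := by
            simpa [smul_eq_mul] using Multiset.sum_le_card_nsmul (X.filter fun x => ¬ e ∣ x)
              (mx X) (fun x hx => le_mx (Multiset.mem_of_mem_filter hx))
          exact_mod_cast this
        have hyeN : Y.sum * e = (X.filter fun x => e ∣ x).sum := by
          rw [hYdef]; exact sum_xdiv_mul e X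
        have heSY : (e:ℝ) * (Y.sum : ℝ) = ((X.filter fun x => e ∣ x).sum : ℝ) := by
          have h := hyeN
          push_cast [← h]
          ring
        have hSY0 : (0:ℝ) ≤ (Y.sum : ℝ) := Nat.cast_nonneg _
        have hfge : (e:ℝ) * (Y.sum : ℝ) ≥ (X.sum : ℝ) - A * (mx X : ℝ) := by
          rw [heSY]
          have h6 : ((Multiset.card (X.filter fun x => ¬ e ∣ x) : ℝ)) * (mx X : ℝ)
              ≤ A * (mx X : ℝ) := mul_le_mul_of_nonneg_right hADe hm0.le
          linarith only [hsum_split, h6, hnotsum]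
        have hfle : (e:ℝ) * (Y.sum : ℝ) ≤ (X.sum : ℝ) := by
          rw [heSY]
          have : (X.filter fun x => e ∣ x).sum ≤ X.sum :=
            msum_le_sum (Multiset.filter_le _ _)
          exact_mod_cast this
        have hSY2 : (Y.sum : ℝ) ≤ (X.sum : ℝ) / 2 := by
          have h := mul_le_mul_of_nonneg_right he2' hSY0
          linarith only [h, hfle]
        -- density of Y
        have t4 : ((15:ℝ)/16 * (Multiset.card X : ℝ))^2 ≤ ((Multiset.card Y : ℝ))^2 :=
          pow_le_pow_left₀ (by positivity) hcardY15 2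
        have hdenseY : ((Multiset.card Y : ℝ)) ^ 2 ≥ δ * mu Y * mx Y := by
          have t1 : δ * (mu Y:ℝ) * (mx Y:ℝ) ≤ δ * (mu X:ℝ) * (mx Y:ℝ) :=
            mul_le_mul_of_nonneg_right
              (mul_le_mul_of_nonneg_left hμY (by linarith)) hmxY0
          have t2 : δ * (mu X:ℝ) * (mx Y:ℝ) ≤ δ * (mu X:ℝ) * ((mx X:ℝ)/2) :=
            mul_le_mul_of_nonneg_left hmxY2 (by positivity)
          linarith only [t1, t2, hdense, t4, hn2.le]
        -- sum decreases
        have hYsumN : Y.sum ≤ N := by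
          have h2e : 2 * Y.sum ≤ e * Y.sum := Nat.mul_le_mul_right _ he2
          have hye := hyeN
          have hfl : (X.filter fun x => e ∣ x).sum ≤ X.sum :=
            msum_le_sum (Multiset.filter_le _ _)
          have h1 : 1 ≤ X.sum := le_trans hcard1 hSn
          have : 2 * Y.sum ≤ X.sum := by
            calc 2 * Y.sum ≤ e * Y.sum := h2e
              _ = Y.sum * e := Nat.mul_comm e Y.sum
              _ = (X.filter fun x => e ∣ x).sum := hye
              _ ≤ X.sum := hfl
          omega
        obtain ⟨d', hd'1, hdns, hnoAD, hcrd, hsm⟩ :=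
          ih Y hYsumN hY0 hYpos δ α hδ hα0 hαδ hdenseY
        have hcomp : xdiv d' Y = xdiv (e * d') X := by
          rw [hYdef, xdiv_comp e d' he0]
        rw [hcomp] at hdns hnoAD hcrd hsm
        refine ⟨e * d', Nat.one_le_iff_ne_zero.2
          (Nat.mul_ne_zero (by omega) (by omega)), hdns, hnoAD, ?_, ?_⟩
        · -- cardinality bound
          have p1 : (mu Y:ℝ) * (Y.sum:ℝ) ≤ (mu X:ℝ) * ((X.sum:ℝ)/2) :=
            mul_le_mul hμY hSY2 hSY0 hμ0.le
          have hnum : α * (mu Y:ℝ) * (Y.sum:ℝ) ≤ α * ((mu X:ℝ) * ((X.sum:ℝ)/2)) := by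
            rw [mul_assoc]
            exact mul_le_mul_of_nonneg_left p1 hα0.le
          have hfrac : α * (mu Y:ℝ) * (Y.sum:ℝ) / ((Multiset.card Y:ℝ))^2
              ≤ 128/225 * A := by
            have h1 : α * (mu Y:ℝ) * (Y.sum:ℝ) / ((Multiset.card Y:ℝ))^2
                ≤ (α * ((mu X:ℝ) * ((X.sum:ℝ)/2))) / (((15:ℝ)/16 * (Multiset.card X:ℝ))^2) :=
              div_le_div₀ (by positivity) hnum (by positivity) t4
            have h2 : (α * ((mu X:ℝ) * ((X.sum:ℝ)/2))) / (((15:ℝ)/16 * (Multiset.card X:ℝ))^2)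
                = 128/225 * A := by
              rw [hAdef]
              field_simp
              ring
            linarith only [h1, h2]
          linarith only [hcrd, hcardYge, hfrac, hA0]
        · -- sum bound
          have he0' : (0:ℝ) < (e:ℝ) := by exact_mod_cast he0
          have hmul := mul_le_mul_of_nonneg_left hsm.le he0'.le
          have p1 : (mu Y:ℝ) * (Y.sum:ℝ) ≤ (mu X:ℝ) * ((X.sum:ℝ)/2) :=
            mul_le_mul hμY hSY2 hSY0 hμ0.le
          have p2 : (mx Y:ℝ) * (e:ℝ) ≤ (mx X:ℝ) := by linarith [hemxY]
          have p3 : (mu Y:ℝ) * (Y.sum:ℝ) * ((mx Y:ℝ) * (e:ℝ))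
              ≤ (mu X:ℝ) * ((X.sum:ℝ)/2) * (mx X:ℝ) :=
            mul_le_mul p1 p2 (by positivity) (by positivity)
          have hetle : (e:ℝ) * (α * (mu Y:ℝ) * (Y.sum:ℝ) * (mx Y:ℝ) / ((Multiset.card Y:ℝ))^2)
              ≤ 128/225 * (α * (mu X:ℝ) * (X.sum:ℝ) * (mx X:ℝ) / ((Multiset.card X:ℝ))^2) := by
            have heq : (e:ℝ) * (α * (mu Y:ℝ) * (Y.sum:ℝ) * (mx Y:ℝ) / ((Multiset.card Y:ℝ))^2)
                = (α * ((mu Y:ℝ) * (Y.sum:ℝ) * ((mx Y:ℝ) * (e:ℝ)))) / ((Multiset.card Y:ℝ))^2 := by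
              ring
            have hnum2 : α * ((mu Y:ℝ) * (Y.sum:ℝ) * ((mx Y:ℝ) * (e:ℝ)))
                ≤ α * ((mu X:ℝ) * ((X.sum:ℝ)/2) * (mx X:ℝ)) :=
              mul_le_mul_of_nonneg_left p3 hα0.le
            have h1 : (α * ((mu Y:ℝ) * (Y.sum:ℝ) * ((mx Y:ℝ) * (e:ℝ)))) / ((Multiset.card Y:ℝ))^2
                ≤ (α * ((mu X:ℝ) * ((X.sum:ℝ)/2) * (mx X:ℝ)))
                  / (((15:ℝ)/16 * (Multiset.card X:ℝ))^2) :=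
              div_le_div₀ (by positivity) hnum2 (by positivity) t4
            have h2 : (α * ((mu X:ℝ) * ((X.sum:ℝ)/2) * (mx X:ℝ)))
                  / (((15:ℝ)/16 * (Multiset.card X:ℝ))^2)
                = 128/225 * (α * (mu X:ℝ) * (X.sum:ℝ) * (mx X:ℝ) / ((Multiset.card X:ℝ))^2) := by
              field_simp
              ring
            linarith only [h1, h2, heq.le, heq.ge]
          have hAB : A * (mx X:ℝ) = α * (mu X:ℝ) * (X.sum:ℝ) * (mx X:ℝ) / ((Multiset.card X:ℝ))^2 := by
            rw [hAdef]; ring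
          have hB0 : (0:ℝ) ≤ α * (mu X:ℝ) * (X.sum:ℝ) * (mx X:ℝ) / ((Multiset.card X:ℝ))^2 := by
            positivity
          have hcast : ((e * d' : ℕ) : ℝ) * ((xdiv (e * d') X).sum : ℝ)
              = (e:ℝ) * ((d':ℝ) * ((xdiv (e * d') X).sum : ℝ)) := by
            push_cast
            ring
          rw [← hcast] at hmul
          rw [ge_iff_le]
          calc (X.sum : ℝ) - 5 / 2 * (α * ↑(mu X) * ↑X.sum * ↑(mx X) / (↑(Multiset.card X):ℝ) ^ 2)
              ≤ ((e * d' : ℕ) : ℝ) * ((xdiv (e * d') X).sum : ℝ) := by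
                linarith only [hmul, hfge, hetle, hB0, hAB]
            _ = _ := by norm_cast
      · push_neg at hAD
        refine ⟨1, le_refl 1, ?_, ?_, ?_, ?_⟩
        · rw [xdiv_one]; exact hdense
        · rw [xdiv_one, ← hAdef]
          exact fun e he => not_le.2 (hAD e he)
        · rw [xdiv_one]; linarith only [hA0]
        · rw [xdiv_one, Nat.cast_one, one_mul]
          have hB0 : (0:ℝ) ≤ α * (mu X:ℝ) * (X.sum:ℝ) * (mx X:ℝ) / ((Multiset.card X:ℝ))^2 := by
            positivity
          linarith only [hB0]


end BW

open BW in


/-- Theorem 4.1 of Bringmann–Wellnitz.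
Let `X` be a nonempty finite multiset of positive integers, `δ ≥ 1` and `0 < α ≤ δ/16` reals.
If `X` is `δ`-dense (i.e. `|X|² ≥ δ·μ(X)·max(X)`), then there is an integer `d ≥ 1` such that
`X' := X(d)/d` is `δ`-dense and has no `α`-almost divisor, and moreover
`d ≤ 4·μ(X)·Σ(X)/|X|²`, `|X'| ≥ 0.75·|X|` and `Σ(X') ≥ 0.75·Σ(X)/d`.
Here for an integer `e > 1`, `e` is an `α`-almost divisor of `X'` if
`|X' \ X'(e)| ≤ α·μ(X')·Σ(X')/|X'|²`. -/
theorem stmt1 (X : Multiset ℕ) (hXne : X ≠ 0) (hXpos : ∀ x ∈ X, 0 < x)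
    (δ α : ℝ) (hδ : 1 ≤ δ) (hα0 : 0 < α) (hα : α ≤ δ / 16)
    (hdense : ((X.card : ℝ)) ^ 2 ≥
      δ * (X.toFinset.sup fun x => X.count x) * (X.toFinset.sup id)) :
    ∃ d : ℕ, 1 ≤ d ∧
      ∃ X' : Multiset ℕ,
        X' = (X.filter fun x => d ∣ x).map (fun x => x / d) ∧
        -- X' is δ-dense
        ((X'.card : ℝ)) ^ 2 ≥
          δ * (X'.toFinset.sup fun x => X'.count x) * (X'.toFinset.sup id) ∧
        -- X' has no α-almost divisor
        (∀ e : ℕ, 1 < e →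
          ¬ (((X'.filter fun x => ¬ e ∣ x).card : ℝ) ≤
              α * (X'.toFinset.sup fun x => X'.count x) * X'.sum / ((X'.card : ℝ)) ^ 2)) ∧
        -- additional properties
        (d : ℝ) ≤ 4 * (X.toFinset.sup fun x => X.count x) * X.sum / ((X.card : ℝ)) ^ 2 ∧
        (X'.card : ℝ) ≥ 0.75 * (X.card : ℝ) ∧
        (X'.sum : ℝ) ≥ 0.75 * (X.sum : ℝ) / d := by
  have hdense' : ((Multiset.card X : ℝ)) ^ 2 ≥ δ * mu X * mx X := hdense
  obtain ⟨d, hd1, hdns, hnoAD, hcrd, hsm⟩ :=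
    key X.sum X le_rfl hXne hXpos δ α hδ hα0 hα hdense'
  have hd0 : 0 < d := hd1
  have hd0r : (0:ℝ) < (d:ℝ) := by exact_mod_cast hd0
  have hcard1 : 1 ≤ Multiset.card X := Multiset.card_pos.2 hXne
  have hn0 : (0:ℝ) < (Multiset.card X : ℝ) := by exact_mod_cast hcard1
  have hn2 : (0:ℝ) < ((Multiset.card X : ℝ))^2 := by positivity
  have hμ0 : (0:ℝ) < (mu X : ℝ) := by exact_mod_cast one_le_mu hXne
  have hm0 : (0:ℝ) < (mx X : ℝ) := by exact_mod_cast one_le_mx hXne hXpos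
  have hSn : Multiset.card X ≤ X.sum := card_le_msum hXpos
  have hS0 : (0:ℝ) < (X.sum : ℝ) := by
    have : 1 ≤ X.sum := le_trans hcard1 hSn
    exact_mod_cast this
  have hA16 : α * mu X * X.sum / ((Multiset.card X : ℝ)) ^ 2 ≤ (Multiset.card X : ℝ) / 16 :=
    A_le hXne hXpos hδ hα0 hα hdense'
  have hc34 : 3/4 * (Multiset.card X : ℝ) ≤ (Multiset.card (xdiv d X) : ℝ) := by
    linarith only [hcrd, hA16, hn0.le]
  -- B ≤ S/16
  have hαμm : α * (mu X:ℝ) * (mx X:ℝ) ≤ ((Multiset.card X:ℝ))^2 / 16 := by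
    have p := mul_le_mul_of_nonneg_right hα (mul_nonneg hμ0.le hm0.le)
    linarith only [p, hdense']
  have hB16 : α * (mu X:ℝ) * (X.sum:ℝ) * (mx X:ℝ) / ((Multiset.card X:ℝ))^2
      ≤ (X.sum:ℝ) / 16 := by
    rw [div_le_div_iff₀ hn2 (by norm_num : (0:ℝ) < 16)]
    have p := mul_le_mul_of_nonneg_right hαμm hS0.le
    linarith only [p]
  -- d * Σ' ≤ S
  have hdS : (d:ℝ) * ((xdiv d X).sum : ℝ) ≤ (X.sum : ℝ) := by
    have h1 : (xdiv d X).sum * d ≤ X.sum := by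
      rw [sum_xdiv_mul d X]
      exact msum_le_sum (Multiset.filter_le _ _)
    have h2 : ((xdiv d X).sum : ℝ) * (d:ℝ) ≤ (X.sum : ℝ) := by exact_mod_cast h1
    linarith only [h2]
  -- Lemma A for X'
  have hA2 : (Multiset.card (xdiv d X))^2 ≤ 2 * mu X * (xdiv d X).sum :=
    lemA (xdiv d X) (xdiv_pos hd0 hXpos) (mu X) (one_le_mu hXne)
      (fun v => by rw [count_xdiv hd0]; exact count_le_mu X (d * v))
  have hA2r : ((Multiset.card (xdiv d X) : ℝ))^2 ≤ 2 * (mu X:ℝ) * ((xdiv d X).sum : ℝ) := by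
    exact_mod_cast hA2
  refine ⟨d, hd1, xdiv d X, rfl, hdns, hnoAD, ?_, ?_, ?_⟩
  · -- d bound
    rw [show (X.toFinset.sup fun x => X.count x) = mu X from rfl,
      le_div_iff₀ hn2]
    have q1 : (d:ℝ) * ((3/4 * (Multiset.card X:ℝ))^2) ≤ (d:ℝ) * ((Multiset.card (xdiv d X):ℝ))^2 :=
      mul_le_mul_of_nonneg_left (pow_le_pow_left₀ (by positivity) hc34 2) (by positivity)
    have q2 : (d:ℝ) * ((Multiset.card (xdiv d X):ℝ))^2
        ≤ (d:ℝ) * (2 * (mu X:ℝ) * ((xdiv d X).sum : ℝ)) :=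
      mul_le_mul_of_nonneg_left hA2r (by positivity)
    have q3 : (d:ℝ) * (2 * (mu X:ℝ) * ((xdiv d X).sum : ℝ))
        = 2 * (mu X:ℝ) * ((d:ℝ) * ((xdiv d X).sum : ℝ)) := by ring
    have q4 : 2 * (mu X:ℝ) * ((d:ℝ) * ((xdiv d X).sum : ℝ)) ≤ 2 * (mu X:ℝ) * (X.sum:ℝ) :=
      mul_le_mul_of_nonneg_left hdS (by positivity)
    have q5 : (0:ℝ) ≤ (mu X:ℝ) * (X.sum:ℝ) := by positivity
    linarith only [q1, q2, q3.le, q3.ge, q4, q5]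
  · -- cardinality bound
    have h75 : (0.75 : ℝ) = 3/4 := by norm_num
    rw [h75]
    exact ge_iff_le.2 hc34
  · -- sum bound
    have h75 : (0.75 : ℝ) = 3/4 := by norm_num
    rw [h75, ge_iff_le, div_le_iff₀ hd0r]
    linarith only [hsm, hB16, hS0.le]
end

section
/- Let w_max ≥ 1 be an integer and let X and Y be finite multisets of integers in {1,…,w_max} with X nonempty, satisfying |X| ≥ 1500·(log³(2|X|)·μ(X)·w_max)^{1/2} and Σ(Y) ≥ 340000·log(2|X|)·μ(X)·w_max²/|X|. Let d ≥ 1 be an integer and set X' := X(d)/d. Assume X' is nonempty and that d ≤ 4·μ(X)·Σ(X)/|X|², |X'| ≥ 0.75·|X|, and Σ(X') ≥ 0.75·Σ(X)/d. Define C_λ(X') := 169920·log(2μ(X')) and λ(X') := C_λ(X')·μ(X')·max(X')·Σ(X')/|X'|². Then d·λ(X') ≤ Σ(Y) − d·w_max and d·(Σ(X') − 2λ(X')) ≥ d·w_max. -/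
set_option maxHeartbeats 1000000 in
/-- Claim 3.4: interval bounds.
Let `wmax ≥ 1` and let `X, Y` be finite multisets of integers in `{1,…,wmax}` with `X`
nonempty, satisfying `|X| ≥ 1500·(log³(2|X|)·μ(X)·wmax)^{1/2}` and
`Σ(Y) ≥ 340000·log(2|X|)·μ(X)·wmax²/|X|`. Let `d ≥ 1` and `X' := X(d)/d` be nonempty with
`d ≤ 4·μ(X)·Σ(X)/|X|²`, `|X'| ≥ 0.75·|X|` and `Σ(X') ≥ 0.75·Σ(X)/d`. With
`Cλ(X') := 169920·log(2μ(X'))` and `λ(X') := Cλ(X')·μ(X')·max(X')·Σ(X')/|X'|²`, we have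
`d·λ(X') ≤ Σ(Y) − d·wmax` and `d·(Σ(X') − 2λ(X')) ≥ d·wmax`. -/
theorem stmt3 (wmax : ℕ) (hwmax : 1 ≤ wmax) (X Y : Multiset ℕ)
    (hX : ∀ x ∈ X, 1 ≤ x ∧ x ≤ wmax)
    (hY : ∀ y ∈ Y, 1 ≤ y ∧ y ≤ wmax)
    (hXne : X ≠ 0)
    (h1 : (X.card : ℝ) ≥
      1500 * Real.sqrt ((Real.logb 2 (2 * X.card)) ^ 3 *
        (X.toFinset.sup fun x => X.count x) * wmax))
    (h2 : (Y.sum : ℝ) ≥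
      340000 * Real.logb 2 (2 * X.card) *
        (X.toFinset.sup fun x => X.count x) * wmax ^ 2 / X.card)
    (d : ℕ) (hd : 1 ≤ d)
    (X' : Multiset ℕ) (hX' : X' = (X.filter fun x => d ∣ x).map (fun x => x / d))
    (hX'ne : X' ≠ 0)
    (hdle : (d : ℝ) ≤
      4 * (X.toFinset.sup fun x => X.count x) * X.sum / ((X.card : ℝ)) ^ 2)
    (hcard : (X'.card : ℝ) ≥ 0.75 * (X.card : ℝ))
    (hsum : (X'.sum : ℝ) ≥ 0.75 * (X.sum : ℝ) / d)
    (Clam lam : ℝ)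
    (hClam : Clam = 169920 * Real.logb 2 (2 * (X'.toFinset.sup fun x => X'.count x)))
    (hlam : lam = Clam * (X'.toFinset.sup fun x => X'.count x) *
      (X'.toFinset.sup id) * X'.sum / ((X'.card : ℝ)) ^ 2) :
    (d : ℝ) * lam ≤ (Y.sum : ℝ) - (d : ℝ) * wmax ∧
    (d : ℝ) * ((X'.sum : ℝ) - 2 * lam) ≥ (d : ℝ) * wmax := by
  classical
  have hdpos : 0 < d := hd
  have hncard : 0 < X.card := Multiset.card_pos.mpr hXne
  have hn'card : 0 < X'.card := Multiset.card_pos.mpr hX'ne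
  obtain ⟨x0, hx0⟩ := Multiset.exists_mem_of_ne_zero hXne
  obtain ⟨y0, hy0⟩ := Multiset.exists_mem_of_ne_zero hX'ne
  -- μ' ≤ μ (count comparison)
  have hcount : ∀ y, X'.count y ≤ X.count (y * d) := by
    intro y
    rw [hX', Multiset.count_map]
    have hle : (Multiset.filter (fun a => y = a / d) (X.filter fun x => d ∣ x)) ≤
        X.filter (fun a => (y * d) = a) := by
      rw [Multiset.filter_filter]
      refine Multiset.monotone_filter_right _ ?_
      rintro a ⟨h2', h3'⟩
      rw [Nat.eq_mul_of_div_eq_right h3' h2'.symm, mul_comm]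
    calc Multiset.card (Multiset.filter (fun a => y = a / d) (X.filter fun x => d ∣ x))
        ≤ Multiset.card (X.filter (fun a => (y * d) = a)) := Multiset.card_le_card hle
      _ = X.count (y * d) := (Multiset.count_eq_card_filter_eq _ _).symm
  -- now make the sups opaque
  obtain ⟨μn, hμndef⟩ : ∃ m : ℕ, (X.toFinset.sup fun x => X.count x) = m := ⟨_, rfl⟩
  obtain ⟨μn', hμn'def⟩ : ∃ m : ℕ, (X'.toFinset.sup fun x => X'.count x) = m := ⟨_, rfl⟩
  obtain ⟨Mn, hMndef⟩ : ∃ m : ℕ, (X'.toFinset.sup id) = m := ⟨_, rfl⟩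
  rw [hμndef] at h1 h2 hdle
  rw [hμn'def] at hClam
  rw [hμn'def, hMndef] at hlam
  have hμ1 : 1 ≤ μn := hμndef ▸ le_trans (Multiset.count_pos.mpr hx0)
      (Finset.le_sup (f := fun x => X.count x) (Multiset.mem_toFinset.mpr hx0))
  have hμ'1 : 1 ≤ μn' := hμn'def ▸ le_trans (Multiset.count_pos.mpr hy0)
      (Finset.le_sup (f := fun x => X'.count x) (Multiset.mem_toFinset.mpr hy0))
  have hμlen : μn ≤ Multiset.card X :=
    hμndef ▸ Finset.sup_le fun x _ => Multiset.count_le_card x X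
  have hμ'μ : μn' ≤ μn := by
    rw [← hμndef, ← hμn'def]
    refine Finset.sup_le fun y hy => le_trans (hcount y) ?_
    by_cases hmem : (y * d) ∈ X
    · exact Finset.le_sup (f := fun x => X.count x) (Multiset.mem_toFinset.mpr hmem)
    · simp [Multiset.count_eq_zero.mpr hmem]
  -- d * max(X') ≤ wmax
  have hdM : d * Mn ≤ wmax := by
    rw [← hMndef]
    have hM : (X'.toFinset.sup id) ≤ wmax / d := by
      refine Finset.sup_le fun y hy => ?_
      have hy' : y ∈ X' := Multiset.mem_toFinset.mp hy
      rw [hX'] at hy'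
      obtain ⟨x, hxmem, rfl⟩ := Multiset.mem_map.mp hy'
      have hx := Multiset.mem_filter.mp hxmem
      exact Nat.div_le_div_right ((hX x hx.1).2)
    calc d * (X'.toFinset.sup id) ≤ d * (wmax / d) := Nat.mul_le_mul_left _ hM
      _ ≤ wmax := Nat.mul_div_le wmax d
  -- Σ(X) ≤ |X| * wmax
  have hSle : X.sum ≤ Multiset.card X * wmax := by
    simpa [smul_eq_mul] using Multiset.sum_le_card_nsmul X wmax (fun x hx => (hX x hx).2)
  -- d * Σ(X') ≤ Σ(X)
  have hdS : d * X'.sum ≤ X.sum := by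
    have h1' : d * X'.sum = (X.filter fun x => d ∣ x).sum := by
      rw [hX', ← Multiset.sum_map_mul_left]
      rw [Multiset.map_congr rfl (fun x hx => Nat.mul_div_cancel' (Multiset.mem_filter.mp hx).2)]
      simp
    rw [h1']
    conv_rhs => rw [← Multiset.filter_add_not (fun x => d ∣ x) X]
    rw [Multiset.sum_add]
    exact Nat.le_add_right _ _
  -- real casts
  have hn1 : (1 : ℝ) ≤ (Multiset.card X : ℝ) := by exact_mod_cast hncard
  have hn'1 : (1 : ℝ) ≤ (Multiset.card X' : ℝ) := by exact_mod_cast hn'card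
  have hnpos : (0 : ℝ) < (Multiset.card X : ℝ) := by linarith
  have hn'pos : (0 : ℝ) < (Multiset.card X' : ℝ) := by linarith
  have hn0 : (0 : ℝ) ≤ (Multiset.card X : ℝ) := le_of_lt hnpos
  have hw1 : (1 : ℝ) ≤ (wmax : ℝ) := by exact_mod_cast hwmax
  have hd1 : (1 : ℝ) ≤ (d : ℝ) := by exact_mod_cast hd
  have hμ1R : (1 : ℝ) ≤ (μn : ℝ) := by exact_mod_cast hμ1
  have hμ'1R : (1 : ℝ) ≤ (μn' : ℝ) := by exact_mod_cast hμ'1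
  have hμ'μR : (μn' : ℝ) ≤ (μn : ℝ) := by exact_mod_cast hμ'μ
  have hμlenR : (μn : ℝ) ≤ (Multiset.card X : ℝ) := by exact_mod_cast hμlen
  have hdMR : (d : ℝ) * (Mn : ℝ) ≤ (wmax : ℝ) := by exact_mod_cast hdM
  have hSleR : (X.sum : ℝ) ≤ (Multiset.card X : ℝ) * (wmax : ℝ) := by exact_mod_cast hSle
  have hdSR : (d : ℝ) * (X'.sum : ℝ) ≤ (X.sum : ℝ) := by exact_mod_cast hdS
  have hM0 : (0 : ℝ) ≤ (Mn : ℝ) := Nat.cast_nonneg _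
  have hS'0 : (0 : ℝ) ≤ (X'.sum : ℝ) := Nat.cast_nonneg _
  have hS0 : (0 : ℝ) ≤ (X.sum : ℝ) := Nat.cast_nonneg _
  have hw0 : (0 : ℝ) ≤ (wmax : ℝ) := by linarith
  have hμ0 : (0 : ℝ) ≤ (μn : ℝ) := by linarith
  have hμ'0 : (0 : ℝ) ≤ (μn' : ℝ) := by linarith
  have hd0 : (0 : ℝ) ≤ (d : ℝ) := by linarith
  have hdRpos : (0 : ℝ) < (d : ℝ) := by linarith
  -- logs
  obtain ⟨L, hLdef⟩ : ∃ l : ℝ, Real.logb 2 (2 * (Multiset.card X : ℝ)) = l := ⟨_, rfl⟩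
  obtain ⟨L', hL'def⟩ : ∃ l : ℝ, Real.logb 2 (2 * (μn' : ℝ)) = l := ⟨_, rfl⟩
  rw [hLdef] at h1 h2
  rw [hL'def] at hClam
  have hL1 : 1 ≤ L := by
    rw [← hLdef, ← Real.logb_self_eq_one (b := 2) (by norm_num)]
    exact Real.logb_le_logb_of_le one_lt_two (by norm_num) (by linarith)
  have hL'1 : 1 ≤ L' := by
    rw [← hL'def, ← Real.logb_self_eq_one (b := 2) (by norm_num)]
    exact Real.logb_le_logb_of_le one_lt_two (by norm_num) (by linarith)
  have hL'L : L' ≤ L := by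
    rw [← hLdef, ← hL'def]
    exact Real.logb_le_logb_of_le one_lt_two (by linarith) (by linarith)
  have hL0 : (0 : ℝ) ≤ L := by linarith
  have hL'0 : (0 : ℝ) ≤ L' := by linarith
  -- n² ≥ 2250000 L³ μ w
  have hA0 : (0 : ℝ) ≤ L ^ 3 * (μn : ℝ) * (wmax : ℝ) :=
    mul_nonneg (mul_nonneg (pow_nonneg hL0 3) hμ0) hw0
  have hn2 : 2250000 * (L ^ 3 * (μn : ℝ) * (wmax : ℝ)) ≤ (Multiset.card X : ℝ) ^ 2 := by
    have h1' : (1500 * Real.sqrt (L ^ 3 * (μn : ℝ) * (wmax : ℝ))) ^ 2 ≤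
        (Multiset.card X : ℝ) ^ 2 := by
      apply pow_le_pow_left₀ (by positivity) h1
    rw [mul_pow, Real.sq_sqrt hA0] at h1'
    linarith only [h1']
  -- cleared hypotheses
  have h2' : 340000 * (L * (μn : ℝ) * (wmax : ℝ) ^ 2) ≤ (Y.sum : ℝ) * (Multiset.card X : ℝ) := by
    rw [ge_iff_le, div_le_iff₀ hnpos] at h2
    linarith only [h2]
  have hdle' : (d : ℝ) * (Multiset.card X : ℝ) ^ 2 ≤ 4 * (μn : ℝ) * (X.sum : ℝ) := by
    rw [le_div_iff₀ (by positivity)] at hdle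
    linarith only [hdle]
  have hsum' : 0.75 * (X.sum : ℝ) ≤ (X'.sum : ℝ) * (d : ℝ) := by
    rw [ge_iff_le, div_le_iff₀ hdRpos] at hsum
    linarith only [hsum]
  have hn'ne : (Multiset.card X' : ℝ) ≠ 0 := ne_of_gt hn'pos
  have hlam' : lam * (Multiset.card X' : ℝ) ^ 2 =
      169920 * L' * (μn' : ℝ) * (Mn : ℝ) * (X'.sum : ℝ) := by
    rw [hlam, hClam]
    field_simp
  have hn'sq : (0.75 * (Multiset.card X : ℝ)) ^ 2 ≤ (Multiset.card X' : ℝ) ^ 2 :=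
    pow_le_pow_left₀ (by positivity) hcard 2
  -- Goal 1
  have hdn : (d : ℝ) * (Multiset.card X : ℝ) ≤ 4 * (μn : ℝ) * (wmax : ℝ) := by
    have t := mul_le_mul_of_nonneg_left hSleR (show (0:ℝ) ≤ 4 * (μn : ℝ) by linarith)
    have h4 : ((d : ℝ) * (Multiset.card X : ℝ)) * (Multiset.card X : ℝ) ≤
        (4 * (μn : ℝ) * (wmax : ℝ)) * (Multiset.card X : ℝ) := by linarith only [hdle', t]
    exact le_of_mul_le_mul_right h4 hnpos
  have hdwn : (d : ℝ) * (wmax : ℝ) * (Multiset.card X : ℝ) ≤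
      4 * (L * (μn : ℝ) * (wmax : ℝ) ^ 2) := by
    have u := mul_le_mul_of_nonneg_right hdn hw0
    have v : (0:ℝ) ≤ (L - 1) * ((μn : ℝ) * (wmax : ℝ) ^ 2) :=
      mul_nonneg (by linarith) (by positivity)
    linarith only [u, v]
  have hc : 339996 * (L * (μn : ℝ) * (wmax : ℝ) ^ 2) ≤
      ((Y.sum : ℝ) - (d : ℝ) * (wmax : ℝ)) * (Multiset.card X : ℝ) := by
    linarith only [h2', hdwn]
  have hT0 : (0 : ℝ) ≤ L * (μn : ℝ) * (wmax : ℝ) ^ 2 :=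
    mul_nonneg (mul_nonneg hL0 hμ0) (by positivity)
  have h0 : (0 : ℝ) ≤ (Y.sum : ℝ) - (d : ℝ) * (wmax : ℝ) := by
    nlinarith only [hc, hT0, hn1]
  have hS'nw : (X'.sum : ℝ) ≤ (Multiset.card X : ℝ) * (wmax : ℝ) := by
    have t := mul_nonneg (sub_nonneg.2 hd1) hS'0
    linarith only [hdSR, hSleR, t]
  have hMw : (Mn : ℝ) ≤ (wmax : ℝ) := by
    have t := mul_nonneg (sub_nonneg.2 hd1) hM0
    linarith only [hdMR, t]
  have t1 : L' * (μn' : ℝ) ≤ L * (μn : ℝ) := mul_le_mul hL'L hμ'μR hμ'0 hL0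
  have hLμ0 : (0:ℝ) ≤ L * (μn : ℝ) := mul_nonneg hL0 hμ0
  have e1 : L' * (μn' : ℝ) * (X'.sum : ℝ) * ((d : ℝ) * (Mn : ℝ)) ≤
      L * (μn : ℝ) * ((Multiset.card X : ℝ) * (wmax : ℝ)) * (wmax : ℝ) := by
    have t2 : L' * (μn' : ℝ) * (X'.sum : ℝ) ≤
        L * (μn : ℝ) * ((Multiset.card X : ℝ) * (wmax : ℝ)) :=
      mul_le_mul t1 hS'nw hS'0 hLμ0
    exact mul_le_mul t2 hdMR (mul_nonneg hd0 hM0)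
      (mul_nonneg hLμ0 (mul_nonneg hn0 hw0))
  have f1 : (d : ℝ) * (169920 * L' * (μn' : ℝ) * (Mn : ℝ) * (X'.sum : ℝ)) ≤
      169920 * (Multiset.card X : ℝ) * (L * (μn : ℝ) * (wmax : ℝ) ^ 2) := by
    linarith only [e1]
  have f2 : 0.5625 * (Multiset.card X : ℝ) * (339996 * (L * (μn : ℝ) * (wmax : ℝ) ^ 2)) ≤
      ((Y.sum : ℝ) - (d : ℝ) * (wmax : ℝ)) * (Multiset.card X' : ℝ) ^ 2 := by
    have g1 := mul_le_mul_of_nonneg_left hc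
      (show (0:ℝ) ≤ 0.5625 * (Multiset.card X : ℝ) by linarith)
    have g2 := mul_le_mul_of_nonneg_left hn'sq h0
    linarith only [g1, g2]
  have hnT0 : (0 : ℝ) ≤ (Multiset.card X : ℝ) * (L * (μn : ℝ) * (wmax : ℝ) ^ 2) :=
    mul_nonneg hn0 hT0
  have f3 : ((d : ℝ) * lam) * (Multiset.card X' : ℝ) ^ 2 ≤
      ((Y.sum : ℝ) - (d : ℝ) * (wmax : ℝ)) * (Multiset.card X' : ℝ) ^ 2 := by
    have heq : ((d : ℝ) * lam) * (Multiset.card X' : ℝ) ^ 2 =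
        (d : ℝ) * (169920 * L' * (μn' : ℝ) * (Mn : ℝ) * (X'.sum : ℝ)) := by
      calc ((d : ℝ) * lam) * (Multiset.card X' : ℝ) ^ 2
          = (d : ℝ) * (lam * (Multiset.card X' : ℝ) ^ 2) := by ring
        _ = _ := by rw [hlam']
    rw [heq]
    linarith only [f1, f2, hnT0]
  have goal1 : (d : ℝ) * lam ≤ (Y.sum : ℝ) - (d : ℝ) * (wmax : ℝ) :=
    le_of_mul_le_mul_right f3 (pow_pos hn'pos 2)
  -- Goal 2
  have hL3 : L ≤ L ^ 3 := by
    calc L = L ^ 1 := (pow_one L).symm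
      _ ≤ L ^ 3 := pow_le_pow_right₀ hL1 (by norm_num)
  have hL31 : (1 : ℝ) ≤ L ^ 3 := by
    calc (1:ℝ) = 1 ^ 3 := by norm_num
      _ ≤ L ^ 3 := pow_le_pow_left₀ (by norm_num) hL1 3
  have hLμw : L * (μn : ℝ) * (wmax : ℝ) ≤ L ^ 3 * (μn : ℝ) * (wmax : ℝ) := by
    have t := mul_nonneg (mul_nonneg (show (0:ℝ) ≤ L ^ 3 - L by linarith) hμ0) hw0
    linarith only [t]
  have hD : 1265625 * (L * (μn : ℝ) * (wmax : ℝ)) ≤ (Multiset.card X' : ℝ) ^ 2 := by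
    linarith only [hn'sq, hn2, hLμw]
  have hQ0 : (0 : ℝ) ≤ L * (μn : ℝ) * (wmax : ℝ) * (X'.sum : ℝ) :=
    mul_nonneg (mul_nonneg hLμ0 hw0) hS'0
  have i1 : L' * (μn' : ℝ) * (Mn : ℝ) * (X'.sum : ℝ) ≤
      L * (μn : ℝ) * (wmax : ℝ) * (X'.sum : ℝ) := by
    have t2 : L' * (μn' : ℝ) * (Mn : ℝ) ≤ L * (μn : ℝ) * (wmax : ℝ) :=
      mul_le_mul t1 hMw hM0 hLμ0
    exact mul_le_mul_of_nonneg_right t2 hS'0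
  have i2 : (2 * lam) * (Multiset.card X' : ℝ) ^ 2 ≤
      (0.27 * (X'.sum : ℝ)) * (Multiset.card X' : ℝ) ^ 2 := by
    have heq : (2 * lam) * (Multiset.card X' : ℝ) ^ 2 =
        2 * (169920 * L' * (μn' : ℝ) * (Mn : ℝ) * (X'.sum : ℝ)) := by
      calc (2 * lam) * (Multiset.card X' : ℝ) ^ 2
          = 2 * (lam * (Multiset.card X' : ℝ) ^ 2) := by ring
        _ = _ := by rw [hlam']
    rw [heq]
    have g3 := mul_le_mul_of_nonneg_left hD (show (0:ℝ) ≤ 0.27 * (X'.sum : ℝ) by linarith)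
    linarith only [i1, g3, hQ0]
  have h2lam : 2 * lam ≤ 0.27 * (X'.sum : ℝ) :=
    le_of_mul_le_mul_right i2 (pow_pos hn'pos 2)
  have hμS' : 0.75 * (Multiset.card X : ℝ) ^ 2 ≤ 4 * (μn : ℝ) * (X'.sum : ℝ) := by
    have t := mul_le_mul_of_nonneg_left hsum' (show (0:ℝ) ≤ 4 * (μn : ℝ) by linarith)
    have h5 : (0.75 * (Multiset.card X : ℝ) ^ 2) * (d : ℝ) ≤
        (4 * (μn : ℝ) * (X'.sum : ℝ)) * (d : ℝ) := by linarith only [hdle', t]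
    exact le_of_mul_le_mul_right h5 hdRpos
  have hμw : (μn : ℝ) * (wmax : ℝ) ≤ L ^ 3 * (μn : ℝ) * (wmax : ℝ) := by
    have t := mul_nonneg (mul_nonneg (show (0:ℝ) ≤ L ^ 3 - 1 by linarith) hμ0) hw0
    linarith only [t]
  have h6 : (421875 * (wmax : ℝ)) * (4 * (μn : ℝ)) ≤ (X'.sum : ℝ) * (4 * (μn : ℝ)) := by
    linarith only [hμS', hn2, hμw]
  have hS'w : 421875 * (wmax : ℝ) ≤ (X'.sum : ℝ) :=
    le_of_mul_le_mul_right h6 (by linarith)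
  have h0' : (wmax : ℝ) ≤ (X'.sum : ℝ) - 2 * lam := by linarith only [h2lam, hS'w, hw0]
  refine ⟨goal1, ?_⟩
  rw [ge_iff_le]
  have t := mul_nonneg hd0 (show (0:ℝ) ≤ (X'.sum : ℝ) - 2 * lam - (wmax : ℝ) by linarith)
  linarith only [t]
end

section
/- Consider a 0-1-Knapsack instance with strictly decreasing profit-to-weight ratios and let x* be an optimal solution. Then there are no nonempty sets A ⊆ {i ∈ {1,…,n} : x*_i = 0} and B ⊆ {i ∈ {1,…,n} : x*_i = 1} with max(A) < min(B) that have the same total weight, i.e., with Σ_{i∈A} w_i = Σ_{i∈B} w_i. -/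
/-- Lemma 4.3: no equal-weight exchange sets.
Consider a 0-1-Knapsack instance with strictly decreasing profit-to-weight ratios
(`p i * w j > p j * w i` for `i < j`) and let `x` be an optimal solution. Then there are no
nonempty sets `A ⊆ {i : x i = 0}` and `B ⊆ {i : x i = 1}` with `max A < min B` that have
the same total weight. -/
theorem stmt5 (n : ℕ) (hn : 1 ≤ n) (w p : Fin n → ℕ) (W : ℕ)
    (hw : ∀ i, 1 ≤ w i) (hp : ∀ i, 1 ≤ p i)
    (hratio : ∀ i j : Fin n, i < j → p i * w j > p j * w i)
    (x : Fin n → ℕ) (hx01 : ∀ i, x i ≤ 1)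
    (hfeas : ∑ i, w i * x i ≤ W)
    (hopt : ∀ y : Fin n → ℕ, (∀ i, y i ≤ 1) → ∑ i, w i * y i ≤ W →
      ∑ i, p i * y i ≤ ∑ i, p i * x i) :
    ¬ ∃ (A B : Finset (Fin n)) (hA : A.Nonempty) (hB : B.Nonempty),
        (∀ i ∈ A, x i = 0) ∧ (∀ i ∈ B, x i = 1) ∧
        A.max' hA < B.min' hB ∧ ∑ i ∈ A, w i = ∑ i ∈ B, w i := by
  rintro ⟨A, B, hA, hB, hA0, hB1, hlt, hweq⟩
  -- every element of A is less than every element of B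
  have hAB : ∀ i ∈ A, ∀ j ∈ B, i < j := by
    intro i hi j hj
    exact lt_of_le_of_lt (Finset.le_max' A i hi)
      (lt_of_lt_of_le hlt (Finset.min'_le B j hj))
  have hdisj : ∀ i, i ∈ A → i ∉ B := by
    intro i hi hiB
    exact absurd rfl (ne_of_lt (hAB i hi i hiB))
  -- the swapped solution
  set y : Fin n → ℕ := fun i => if i ∈ A then 1 else if i ∈ B then 0 else x i with hy
  have hy1 : ∀ i, y i ≤ 1 := by
    intro i; simp only [hy]; split_ifs with h1 h2
    · exact le_refl 1
    · exact Nat.zero_le 1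
    · exact hx01 i
  -- key sum identity
  have key : ∀ f : Fin n → ℕ,
      ∑ i, f i * y i + ∑ i ∈ B, f i = ∑ i, f i * x i + ∑ i ∈ A, f i := by
    intro f
    have hsub : A ⊆ Bᶜ := fun i hi => Finset.mem_compl.mpr (hdisj i hi)
    have split : ∀ g : Fin n → ℕ,
        ∑ i, g i = ∑ i ∈ A, g i + ∑ i ∈ B, g i + ∑ i ∈ Bᶜ \ A, g i := by
      intro g
      rw [← Finset.sum_add_sum_compl B g]
      rw [← Finset.sum_sdiff hsub]
      ring
    rw [split (fun i => f i * y i), split (fun i => f i * x i)]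
    have e1 : ∑ i ∈ A, f i * y i = ∑ i ∈ A, f i := by
      apply Finset.sum_congr rfl
      intro i hi; simp [hy, hi]
    have e2 : ∑ i ∈ B, f i * y i = 0 := by
      apply Finset.sum_eq_zero
      intro i hi; simp [hy, hi, hdisj, fun h => hdisj i h hi]
      intro h; exact absurd hi (hdisj i h)
    have e3 : ∑ i ∈ Bᶜ \ A, f i * y i = ∑ i ∈ Bᶜ \ A, f i * x i := by
      apply Finset.sum_congr rfl
      intro i hi
      rcases Finset.mem_sdiff.mp hi with ⟨hic, hia⟩
      simp [hy, hia, Finset.mem_compl.mp hic]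
    have e4 : ∑ i ∈ A, f i * x i = 0 := by
      apply Finset.sum_eq_zero
      intro i hi; rw [hA0 i hi, mul_zero]
    have e5 : ∑ i ∈ B, f i * x i = ∑ i ∈ B, f i := by
      apply Finset.sum_congr rfl
      intro i hi; rw [hB1 i hi, mul_one]
    rw [e1, e2, e3, e4, e5]; ring
  -- weight feasibility of y
  have hwy : ∑ i, w i * y i = ∑ i, w i * x i := by
    have := key w
    rw [← hweq] at this
    omega
  -- profit of A exceeds profit of B
  have hpAB : ∑ i ∈ B, p i < ∑ i ∈ A, p i := by
    have hmul : (∑ i ∈ B, p i) * (∑ i ∈ A, w i) < (∑ i ∈ A, p i) * (∑ i ∈ B, w i) := by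
      rw [Finset.sum_mul_sum, Finset.sum_mul_sum]
      rw [Finset.sum_comm (s := B)]
      apply Finset.sum_lt_sum_of_nonempty hA
      intro i hi
      apply Finset.sum_lt_sum_of_nonempty hB
      intro j hj
      exact hratio i j (hAB i hi j hj)
    rw [hweq] at hmul
    have hpos : 0 < ∑ i ∈ B, w i := by
      obtain ⟨j, hj⟩ := hB
      exact lt_of_lt_of_le (hw j) (Finset.single_le_sum (fun i _ => Nat.zero_le _) hj)
    exact Nat.lt_of_mul_lt_mul_right hmul
  -- contradiction with optimality
  have hopt' := hopt y hy1 (hwy ▸ hfeas)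
  have hkp := key p
  omega
end

section
/- Consider a 0-1-Knapsack instance with non-increasing profit-to-weight ratios whose weights satisfy w_i ≤ w_max for all i, and let g be its maximal prefix solution. Then there exists an optimal solution x* such that Σ_{i=1}^n |g_i − x*_i| ≤ 2·w_max − 1. -/
lemma pigeon (wmax N : ℕ) (a b : ℕ → ℕ)
    (ha0 : a 0 = 0) (hb0 : b 0 = 0)
    (hbmono : ∀ l l', l ≤ l' → b l ≤ b l')
    (hastep : ∀ m, a (m + 1) ≤ a m + wmax)
    (htop : b N + 1 ≤ a N + wmax)
    (NS : ∀ m m' l l' c, m ≤ m' → l ≤ l' → 0 < c →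
        a m' = a m + c → b l' = b l + c → False)
    (V : Finset ℕ) (hV : ∀ v ∈ V, 1 ≤ v ∧ ∃ l, l ≤ N ∧ b l = v) :
    V.card ≤ wmax - 1 := by
  classical
  have hne : ∀ v : ℕ, ((Finset.range (N+1)).filter (fun m => a m ≤ v)).Nonempty := by
    intro v
    exact ⟨0, by simp [ha0]⟩
  set J : ℕ → ℕ := fun v => ((Finset.range (N+1)).filter (fun m => a m ≤ v)).max' (hne v) with hJ
  have hJmem : ∀ v, J v ∈ (Finset.range (N+1)).filter (fun m => a m ≤ v) := fun v =>
    Finset.max'_mem _ _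
  have hJN : ∀ v, J v ≤ N := by
    intro v
    have := hJmem v
    simp only [Finset.mem_filter, Finset.mem_range] at this
    omega
  have hJle : ∀ v, a (J v) ≤ v := by
    intro v
    have := hJmem v
    simp only [Finset.mem_filter, Finset.mem_range] at this
    exact this.2
  have hJmax : ∀ v m, m ≤ N → a m ≤ v → m ≤ J v := by
    intro v m hm hav
    exact Finset.le_max' _ m (by simp [Finset.mem_filter, Finset.mem_range]; omega)
  have hJmono : ∀ v v', v ≤ v' → J v ≤ J v' := by
    intro v v' hvv
    exact hJmax v' (J v) (hJN v) (le_trans (hJle v) hvv)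
  have hgapU : ∀ v ∈ V, v + 1 ≤ a (J v) + wmax := by
    intro v hv
    obtain ⟨-, l, hlN, hbl⟩ := hV v hv
    by_cases hJv : J v = N
    · have hbv : v ≤ b N := hbl ▸ hbmono l N hlN
      have haJ : a (J v) = a N := by rw [hJv]
      omega
    · have h1 : J v + 1 ≤ N := lt_of_le_of_ne (hJN v) hJv
      have h2 : ¬ a (J v + 1) ≤ v := by
        intro hle
        have := hJmax v (J v + 1) h1 hle
        omega
      have := hastep (J v)
      omega
  have hgapL : ∀ v ∈ V, a (J v) + 1 ≤ v := by
    intro v hv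
    obtain ⟨hv1, l, hlN, hbl⟩ := hV v hv
    rcases Nat.lt_or_ge (a (J v)) v with h | h
    · omega
    · have heq : a (J v) = v := le_antisymm (hJle v) h
      exact absurd (NS 0 (J v) 0 l v (Nat.zero_le _) (Nat.zero_le _) hv1
        (by omega) (by omega)) (fun h => h)
  have hinj : ∀ v ∈ V, ∀ v' ∈ V, v < v' → v - a (J v) ≠ v' - a (J v') := by
    intro v hv v' hv' hlt heq
    obtain ⟨hv1, l, hlN, hbl⟩ := hV v hv
    obtain ⟨hv1', l', hlN', hbl'⟩ := hV v' hv'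
    have hJlt := hJmono v v' (le_of_lt hlt)
    have h1 := hJle v
    have h2 := hJle v'
    have hll : l ≤ l' := by
      by_contra hcon
      have := hbmono l' l (by omega)
      omega
    exact NS (J v) (J v') l l' (v' - v) hJlt hll (by omega) (by omega) (by omega)
  have hcard : V.card ≤ (Finset.Ico 1 wmax).card := by
    apply Finset.card_le_card_of_injOn (fun v => v - a (J v))
    · intro v hv
      have := hgapL v hv
      have := hgapU v hv
      simp only [Finset.coe_Ico, Set.mem_Ico, Finset.mem_coe, Finset.mem_Ico]
      omega
    · intro v hv v' hv' heq
      simp only [Finset.mem_coe] at hv hv'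
      by_contra hne2
      rcases Nat.lt_or_ge v v' with h | h
      · exact hinj v hv v' hv' h heq
      · exact hinj v' hv' v hv (by omega) heq.symm
  simpa using hcard


set_option maxHeartbeats 1000000 in
/-- classic proximity bound, Eisenbrand–Weismantel / Polak–Rohwedder–Węgrzycki.
Consider a 0-1-Knapsack instance with non-increasing profit-to-weight ratios
(`p i * w j ≥ p j * w i` for `i ≤ j`) whose weights satisfy `w i ≤ wmax`, and let `g` be
its maximal prefix solution (given by the maximal `t ≤ n` with `w 0 + … + w (t-1) ≤ W`).
Then there exists an optimal solution `x` with `Σ_i |g i − x i| ≤ 2·wmax − 1`. -/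
theorem stmt6 (n : ℕ) (hn : 1 ≤ n) (wmax : ℕ) (w p : Fin n → ℕ) (W : ℕ)
    (hw1 : ∀ i, 1 ≤ w i) (hw2 : ∀ i, w i ≤ wmax) (hp : ∀ i, 1 ≤ p i)
    (hratio : ∀ i j : Fin n, i ≤ j → p i * w j ≥ p j * w i)
    (t : ℕ) (ht : t ≤ n)
    (htfeas : ∑ i ∈ Finset.univ.filter (fun i : Fin n => (i : ℕ) < t), w i ≤ W)
    (htmax : ∀ t' ≤ n,
      (∑ i ∈ Finset.univ.filter (fun i : Fin n => (i : ℕ) < t'), w i ≤ W) → t' ≤ t)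
    (g : Fin n → ℕ) (hg : ∀ i : Fin n, g i = if (i : ℕ) < t then 1 else 0) :
    ∃ x : Fin n → ℕ, (∀ i, x i ≤ 1) ∧ (∑ i, w i * x i ≤ W) ∧
      (∀ y : Fin n → ℕ, (∀ i, y i ≤ 1) → ∑ i, w i * y i ≤ W →
        ∑ i, p i * y i ≤ ∑ i, p i * x i) ∧
      (∑ i, |(g i : ℤ) - (x i : ℤ)|) ≤ 2 * (wmax : ℤ) - 1 := by
  classical
  have hwmax1 : 1 ≤ wmax := le_trans (hw1 ⟨0, hn⟩) (hw2 ⟨0, hn⟩)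
  set F : Finset (Fin n → Fin 2) :=
    Finset.univ.filter (fun z => ∑ i, w i * ((z i : ℕ)) ≤ W) with hFdef
  have hF0 : (fun _ => (0 : Fin 2)) ∈ F := by
    rw [hFdef]; simp
  obtain ⟨z₀, hz₀F, hz₀max⟩ := F.exists_max_image (fun z => ∑ i, p i * (z i : ℕ)) ⟨_, hF0⟩
  set M : ℕ := ∑ i, p i * (z₀ i : ℕ) with hMdef
  set F' : Finset (Fin n → Fin 2) := F.filter (fun z => ∑ i, p i * (z i : ℕ) = M) with hF'def
  have hz₀F' : z₀ ∈ F' := by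
    rw [hF'def, Finset.mem_filter]; exact ⟨hz₀F, rfl⟩
  obtain ⟨z, hzF', hzmin⟩ := F'.exists_min_image
    (fun z => ∑ i, |(g i : ℤ) - ((z i : ℕ) : ℤ)|) ⟨z₀, hz₀F'⟩
  have hzF'2 : z ∈ F.filter (fun z => ∑ i, p i * (z i : ℕ) = M) := by rwa [hF'def] at hzF'
  have hzF : z ∈ F := (Finset.mem_filter.mp hzF'2).1
  have hzM : ∑ i, p i * (z i : ℕ) = M := (Finset.mem_filter.mp hzF'2).2
  have hzF2 : z ∈ Finset.univ.filter (fun z : Fin n → Fin 2 => ∑ i, w i * ((z i : ℕ)) ≤ W) := by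
    rwa [hFdef] at hzF
  have hzfeas : ∑ i, w i * (z i : ℕ) ≤ W := (Finset.mem_filter.mp hzF2).2
  have hx1 : ∀ i, (z i : ℕ) ≤ 1 := fun i => Nat.lt_succ_iff.mp (z i).isLt
  -- optimality against arbitrary 0-1 functions
  have hopt : ∀ y : Fin n → ℕ, (∀ i, y i ≤ 1) → ∑ i, w i * y i ≤ W →
      ∑ i, p i * y i ≤ M := by
    intro y hy hyW
    set zy : Fin n → Fin 2 := fun i => ⟨y i, by have := hy i; omega⟩ with hzy
    have hco : ∀ i, (zy i : ℕ) = y i := fun i => rfl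
    have hzyF : zy ∈ F := by
      rw [hFdef, Finset.mem_filter]
      refine ⟨Finset.mem_univ _, ?_⟩
      simpa only [hco] using hyW
    have := hz₀max zy hzyF
    simpa only [hco] using this
  -- the exchange sets
  set A : Finset (Fin n) :=
    Finset.univ.filter (fun i : Fin n => (i:ℕ) < t ∧ (z i : ℕ) = 0) with hAdef
  set B : Finset (Fin n) :=
    Finset.univ.filter (fun i : Fin n => ¬ (i:ℕ) < t ∧ (z i : ℕ) = 1) with hBdef
  have key : ∀ f : Fin n → ℕ, (∑ i, f i * (z i : ℕ)) + (∑ i ∈ A, f i)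
      = (∑ i ∈ Finset.univ.filter (fun i : Fin n => (i:ℕ) < t), f i) + (∑ i ∈ B, f i) := by
    intro f
    rw [hAdef, hBdef, Finset.sum_filter, Finset.sum_filter, Finset.sum_filter,
      ← Finset.sum_add_distrib, ← Finset.sum_add_distrib]
    refine Finset.sum_congr rfl (fun i _ => ?_)
    rcases Nat.le_one_iff_eq_zero_or_eq_one.mp (hx1 i) with h2 | h2 <;>
      by_cases h1 : (i:ℕ) < t <;> simp [h1, h2]
  have hmemA : ∀ i, i ∈ A → (i:ℕ) < t ∧ (z i : ℕ) = 0 := by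
    intro i hi
    rw [hAdef] at hi
    exact (Finset.mem_filter.mp hi).2
  have hmemB : ∀ i, i ∈ B → ¬ (i:ℕ) < t ∧ (z i : ℕ) = 1 := by
    intro i hi
    rw [hBdef] at hi
    exact (Finset.mem_filter.mp hi).2
  have hdist : (∑ i, |(g i : ℤ) - ((z i : ℕ) : ℤ)|) = (A.card : ℤ) + (B.card : ℤ) := by
    have hc : ∀ (s : Finset (Fin n)), (s.card : ℤ) = ∑ i ∈ s, (1:ℤ) := by
      intro s; simp
    rw [hAdef, hBdef, hc, hc, Finset.sum_filter, Finset.sum_filter, ← Finset.sum_add_distrib]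
    refine Finset.sum_congr rfl (fun i _ => ?_)
    rcases Nat.le_one_iff_eq_zero_or_eq_one.mp (hx1 i) with h2 | h2 <;>
      by_cases h1 : (i:ℕ) < t <;> simp [hg i, h1, h2]
  -- mediant inequality
  have hmed : ∀ S T : Finset (Fin n), S ⊆ A → T ⊆ B →
      (∑ j ∈ T, p j) * (∑ i ∈ S, w i) ≤ (∑ i ∈ S, p i) * (∑ j ∈ T, w j) := by
    intro S T hS hT
    rw [Finset.sum_mul_sum, Finset.sum_mul_sum, Finset.sum_comm]
    refine Finset.sum_le_sum (fun i hi => Finset.sum_le_sum (fun j hj => ?_))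
    have hiA := (hmemA i (hS hi)).1
    have hjB := (hmemB j (hT hj)).1
    exact hratio i j (by rw [Fin.le_def]; omega)
  -- no improving swap exists
  have hswap : ∀ S T : Finset (Fin n), S ⊆ A → T ⊆ B →
      (∑ i ∈ S, w i) = (∑ i ∈ T, w i) → 0 < ∑ i ∈ S, w i → False := by
    intro S T hS hT hweq hpos
    have hpST : (∑ j ∈ T, p j) ≤ ∑ i ∈ S, p i := by
      have h := hmed S T hS hT
      rw [hweq] at h
      exact Nat.le_of_mul_le_mul_right h (by omega)
    have hST : ∀ i, i ∈ S → i ∉ T := by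
      intro i hiS hiT
      exact (hmemB i (hT hiT)).1 (hmemA i (hS hiS)).1
    set z' : Fin n → Fin 2 := fun i =>
      if i ∈ S then ⟨1, one_lt_two⟩ else if i ∈ T then ⟨0, two_pos⟩ else z i with hz'def
    have hkey' : ∀ f : Fin n → ℕ, (∑ i, f i * (z' i : ℕ)) + ∑ i ∈ T, f i
        = (∑ i, f i * (z i : ℕ)) + ∑ i ∈ S, f i := by
      intro f
      have hTrw : (∑ i ∈ T, f i) = ∑ i, if i ∈ T then f i else 0 := by
        rw [Finset.sum_ite_mem, Finset.univ_inter]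
      have hSrw : (∑ i ∈ S, f i) = ∑ i, if i ∈ S then f i else 0 := by
        rw [Finset.sum_ite_mem, Finset.univ_inter]
      rw [hTrw, hSrw, ← Finset.sum_add_distrib, ← Finset.sum_add_distrib]
      refine Finset.sum_congr rfl (fun i _ => ?_)
      by_cases hiS : i ∈ S
      · have hxi : (z i : ℕ) = 0 := (hmemA i (hS hiS)).2
        have hiT := hST i hiS
        simp [hz'def, hiS, hiT, hxi]
      · by_cases hiT : i ∈ T
        · have hxi : (z i : ℕ) = 1 := (hmemB i (hT hiT)).2
          simp [hz'def, hiS, hiT, hxi]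
        · simp [hz'def, hiS, hiT]
    have hz'w : ∑ i, w i * (z' i : ℕ) = ∑ i, w i * (z i : ℕ) := by
      have := hkey' w; omega
    have hz'F : z' ∈ F := by
      rw [hFdef, Finset.mem_filter]
      exact ⟨Finset.mem_univ _, by rw [hz'w]; exact hzfeas⟩
    have hz'M : ∑ i, p i * (z' i : ℕ) = M := by
      have h := hkey' p
      have hge := hz₀max z' hz'F
      omega
    have hz'F' : z' ∈ F' := by
      rw [hF'def, Finset.mem_filter]; exact ⟨hz'F, hz'M⟩
    have hSne : 0 < S.card := by
      rcases Finset.eq_empty_or_nonempty S with h | h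
      · rw [h] at hpos; simp at hpos
      · exact Finset.card_pos.mpr h
    have hdist' : (∑ i, |(g i : ℤ) - ((z' i : ℕ) : ℤ)|) + (S.card : ℤ) + (T.card : ℤ)
        = ∑ i, |(g i : ℤ) - ((z i : ℕ) : ℤ)| := by
      have hScard : (S.card : ℤ) = ∑ i, if i ∈ S then (1:ℤ) else 0 := by
        rw [Finset.sum_ite_mem, Finset.univ_inter]; simp
      have hTcard : (T.card : ℤ) = ∑ i, if i ∈ T then (1:ℤ) else 0 := by
        rw [Finset.sum_ite_mem, Finset.univ_inter]; simp
      rw [hScard, hTcard, ← Finset.sum_add_distrib, ← Finset.sum_add_distrib]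
      refine Finset.sum_congr rfl (fun i _ => ?_)
      by_cases hiS : i ∈ S
      · have hmem := hmemA i (hS hiS)
        have hiT := hST i hiS
        simp [hz'def, hiS, hiT, hg i, hmem.1, hmem.2]
      · by_cases hiT : i ∈ T
        · have hmem := hmemB i (hT hiT)
          simp [hz'def, hiS, hiT, hg i, hmem.1, hmem.2]
        · simp [hz'def, hiS, hiT]
    have hmin := hzmin z' hz'F'
    have h1 : (1:ℤ) ≤ (S.card : ℤ) := by exact_mod_cast hSne
    have h0 : (0:ℤ) ≤ (T.card : ℤ) := by positivity
    omega
  by_cases hcase : (∑ i ∈ B, w i) ≤ ∑ i ∈ A, w i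
  · -- the prefix solution itself is optimal
    have hpBA : (∑ j ∈ B, p j) ≤ ∑ i ∈ A, p i := by
      rcases Nat.eq_zero_or_pos (∑ j ∈ B, w j) with h0 | hposB
      · have hBempty : B = ∅ := by
          by_contra hne
          obtain ⟨j, hj⟩ := Finset.nonempty_of_ne_empty hne
          have h1 : 1 ≤ ∑ i ∈ B, w i :=
            le_trans (hw1 j) (Finset.single_le_sum (fun i _ => Nat.zero_le _) hj)
          omega
        rw [hBempty]; simp
      · have h1 := hmed A B (Finset.Subset.refl A) (Finset.Subset.refl B)
        have h2 : (∑ j ∈ B, p j) * (∑ j ∈ B, w j) ≤ (∑ i ∈ A, p i) * (∑ j ∈ B, w j) := by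
          calc (∑ j ∈ B, p j) * (∑ j ∈ B, w j)
              ≤ (∑ j ∈ B, p j) * (∑ i ∈ A, w i) := Nat.mul_le_mul_left _ hcase
            _ ≤ (∑ i ∈ A, p i) * (∑ j ∈ B, w j) := h1
        exact Nat.le_of_mul_le_mul_right h2 hposB
    refine ⟨fun i => if (i:ℕ) < t then 1 else 0, ?_, ?_, ?_, ?_⟩
    · intro i; dsimp only; split <;> omega
    · have hrw : ∑ i, w i * (if (i:ℕ) < t then 1 else 0)
          = ∑ i ∈ Finset.univ.filter (fun i : Fin n => (i:ℕ) < t), w i := by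
        rw [Finset.sum_filter]
        refine Finset.sum_congr rfl (fun i _ => ?_)
        split <;> simp
      rw [hrw]; exact htfeas
    · intro y hy hyW
      have h1 := hopt y hy hyW
      have hrw : ∑ i, p i * (if (i:ℕ) < t then 1 else 0)
          = ∑ i ∈ Finset.univ.filter (fun i : Fin n => (i:ℕ) < t), p i := by
        rw [Finset.sum_filter]
        refine Finset.sum_congr rfl (fun i _ => ?_)
        split <;> simp
      rw [hrw]
      have h2 := key p
      omega
    · have hzero : (∑ i, |(g i : ℤ) - (((if (i:ℕ) < t then 1 else 0 : ℕ)) : ℤ)|) = 0 := by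
        refine Finset.sum_eq_zero (fun i _ => ?_)
        rw [hg i]
        split <;> simp
      rw [hzero]
      omega
  · -- the dist-minimizing optimal solution is close to g
    push_neg at hcase
    have hBne : B.Nonempty := by
      rcases Finset.eq_empty_or_nonempty B with h | h
      · rw [h] at hcase; simp at hcase
      · exact h
    obtain ⟨j0, hj0⟩ := hBne
    have hj0t : t ≤ (j0:ℕ) := by
      have := (hmemB j0 hj0).1
      omega
    have htn : t < n := lt_of_le_of_lt hj0t j0.isLt
    have hWlt : W + 1 ≤ (∑ i ∈ Finset.univ.filter (fun i : Fin n => (i:ℕ) < t), w i)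
        + w ⟨t, htn⟩ := by
      by_contra hcon
      push_neg at hcon
      have hsplit : Finset.univ.filter (fun i : Fin n => (i:ℕ) < t + 1)
          = insert ⟨t, htn⟩ (Finset.univ.filter (fun i : Fin n => (i:ℕ) < t)) := by
        ext i
        simp only [Finset.mem_filter, Finset.mem_univ, true_and, Finset.mem_insert, Fin.ext_iff]
        omega
      have hsum : ∑ i ∈ Finset.univ.filter (fun i : Fin n => (i:ℕ) < t+1), w i ≤ W := by
        rw [hsplit, Finset.sum_insert (by simp)]
        omega
      have := htmax (t+1) (by omega) hsum
      omega
    have hBbound : (∑ i ∈ B, w i) + 1 ≤ (∑ i ∈ A, w i) + wmax := by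
      have h1 := key w
      have h2 := hw2 ⟨t, htn⟩
      omega
    -- prefix sum machinery
    have hpre0 : ∀ C : Finset (Fin n), ∑ i ∈ C.filter (fun i : Fin n => (i:ℕ) < 0), w i = 0 := by
      intro C; simp
    have hpreN : ∀ C : Finset (Fin n),
        ∑ i ∈ C.filter (fun i : Fin n => (i:ℕ) < n), w i = ∑ i ∈ C, w i := by
      intro C; rw [Finset.filter_true_of_mem (fun i _ => i.isLt)]
    have hpremono : ∀ (C : Finset (Fin n)) (m m' : ℕ), m ≤ m' →
        ∑ i ∈ C.filter (fun i : Fin n => (i:ℕ) < m), w i ≤ ∑ i ∈ C.filter (fun i : Fin n => (i:ℕ) < m'), w i := by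
      intro C m m' hmm
      apply Finset.sum_le_sum_of_subset
      intro i hi
      simp only [Finset.mem_filter] at hi ⊢
      exact ⟨hi.1, by omega⟩
    have hprestep : ∀ (C : Finset (Fin n)) (m : ℕ),
        ∑ i ∈ C.filter (fun i : Fin n => (i:ℕ) < m+1), w i
          ≤ (∑ i ∈ C.filter (fun i : Fin n => (i:ℕ) < m), w i) + wmax := by
      intro C m
      by_cases hm : m < n
      · have hsub : C.filter (fun i : Fin n => (i:ℕ) < m+1) ⊆ insert ⟨m, hm⟩ (C.filter (fun i : Fin n => (i:ℕ) < m)) := by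
          intro i hi
          simp only [Finset.mem_filter, Finset.mem_insert] at hi ⊢
          by_cases hieq : (i:ℕ) = m
          · exact Or.inl (Fin.ext hieq)
          · exact Or.inr ⟨hi.1, by omega⟩
        have h3 := Finset.sum_le_sum_of_subset (f := w) hsub
        rw [Finset.sum_insert (by simp)] at h3
        have := hw2 ⟨m, hm⟩
        omega
      · have heqs : C.filter (fun i : Fin n => (i:ℕ) < m+1) = C.filter (fun i : Fin n => (i:ℕ) < m) := by
          apply Finset.filter_congr
          intro i _
          have := i.isLt
          constructor <;> intro <;> omega
        rw [heqs]
        exact Nat.le_add_right _ _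
    have hpreseg : ∀ (C : Finset (Fin n)) (m m' : ℕ), m ≤ m' →
        (∑ i ∈ C.filter (fun i : Fin n => (i:ℕ) < m), w i) +
        (∑ i ∈ C.filter (fun i : Fin n => m ≤ (i:ℕ) ∧ (i:ℕ) < m'), w i) =
        ∑ i ∈ C.filter (fun i : Fin n => (i:ℕ) < m'), w i := by
      intro C m m' hmm
      have e1 : (C.filter (fun i : Fin n => (i:ℕ) < m')).filter (fun i : Fin n => (i:ℕ) < m)
          = C.filter (fun i : Fin n => (i:ℕ) < m) := by
        rw [Finset.filter_filter]
        apply Finset.filter_congr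
        intro i _
        constructor
        · intro h; exact h.2
        · intro h; exact ⟨by omega, h⟩
      have e2 : (C.filter (fun i : Fin n => (i:ℕ) < m')).filter (fun i : Fin n => ¬ (i:ℕ) < m)
          = C.filter (fun i : Fin n => m ≤ (i:ℕ) ∧ (i:ℕ) < m') := by
        rw [Finset.filter_filter]
        apply Finset.filter_congr
        intro i _
        constructor
        · intro h; exact ⟨by omega, h.1⟩
        · intro h; exact ⟨h.2, by omega⟩
      rw [← Finset.sum_filter_add_sum_filter_not (C.filter (fun i : Fin n => (i:ℕ) < m'))
        (fun i : Fin n => (i:ℕ) < m) w, e1, e2]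
    have hNS : ∀ (m m' l l' c : ℕ), m ≤ m' → l ≤ l' → 0 < c →
        (∑ i ∈ A.filter (fun i : Fin n => (i:ℕ) < m'), w i)
          = (∑ i ∈ A.filter (fun i : Fin n => (i:ℕ) < m), w i) + c →
        (∑ i ∈ B.filter (fun i : Fin n => (i:ℕ) < l'), w i)
          = (∑ i ∈ B.filter (fun i : Fin n => (i:ℕ) < l), w i) + c → False := by
      intro m m' l l' c hmm hll hcpos hA2 hB2
      apply hswap (A.filter (fun i : Fin n => m ≤ (i:ℕ) ∧ (i:ℕ) < m'))
        (B.filter (fun i : Fin n => l ≤ (i:ℕ) ∧ (i:ℕ) < l'))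
        (Finset.filter_subset _ _) (Finset.filter_subset _ _)
      · have h1 := hpreseg A m m' hmm
        have h2 := hpreseg B l l' hll
        omega
      · have h1 := hpreseg A m m' hmm
        omega
    -- counting via pigeonhole, both sides
    have hinjgen : ∀ (C : Finset (Fin n)), ∀ i ∈ C, ∀ i' ∈ C, (i:ℕ) < (i':ℕ) →
        (∑ k ∈ C.filter (fun k : Fin n => (k:ℕ) < (i:ℕ)+1), w k) + w i'
          ≤ ∑ k ∈ C.filter (fun k : Fin n => (k:ℕ) < (i':ℕ)+1), w k := by
      intro C i hi i' hi' hlt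
      have hsub : insert i' (C.filter (fun k : Fin n => (k:ℕ) < (i:ℕ)+1))
          ⊆ C.filter (fun k : Fin n => (k:ℕ) < (i':ℕ)+1) := by
        intro k hk
        simp only [Finset.mem_insert, Finset.mem_filter] at hk ⊢
        rcases hk with rfl | ⟨hk1, hk2⟩
        · exact ⟨hi', by omega⟩
        · exact ⟨hk1, by omega⟩
      have h2 : i' ∉ C.filter (fun k : Fin n => (k:ℕ) < (i:ℕ)+1) := by
        simp only [Finset.mem_filter]
        push_neg
        intro _
        omega
      have h3 := Finset.sum_le_sum_of_subset (f := w) hsub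
      rw [Finset.sum_insert h2] at h3
      omega
    have hcardgen : ∀ (C : Finset (Fin n)),
        C.card = (C.image (fun i : Fin n => ∑ k ∈ C.filter (fun k : Fin n => (k:ℕ) < (i:ℕ)+1), w k)).card := by
      intro C
      rw [Finset.card_image_of_injOn]
      intro i hi i' hi' heq
      simp only [Finset.mem_coe] at hi hi'
      dsimp only at heq
      by_contra hne2
      have hne' : (i:ℕ) ≠ (i':ℕ) := fun h => hne2 (Fin.ext h)
      rcases Nat.lt_or_ge (i:ℕ) (i':ℕ) with h | h
      · have := hinjgen C i hi i' hi' h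
        have := hw1 i'
        omega
      · have := hinjgen C i' hi' i hi (by omega)
        have := hw1 i
        omega
    have hVgen : ∀ (C : Finset (Fin n)), ∀ v ∈ C.image
        (fun i : Fin n => ∑ k ∈ C.filter (fun k : Fin n => (k:ℕ) < (i:ℕ)+1), w k),
        1 ≤ v ∧ ∃ l, l ≤ n ∧ (∑ k ∈ C.filter (fun k : Fin n => (k:ℕ) < l), w k) = v := by
      intro C v hv
      obtain ⟨i, hi, rfl⟩ := Finset.mem_image.mp hv
      constructor
      · have hmemf : i ∈ C.filter (fun k : Fin n => (k:ℕ) < (i:ℕ)+1) := by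
          simp only [Finset.mem_filter]
          exact ⟨hi, by omega⟩
        exact le_trans (hw1 i) (Finset.single_le_sum (fun k _ => Nat.zero_le _) hmemf)
      · exact ⟨(i:ℕ)+1, i.isLt, rfl⟩
    have hAcard : A.card ≤ wmax - 1 := by
      rw [hcardgen A]
      apply pigeon wmax n (fun m => ∑ k ∈ B.filter (fun k : Fin n => (k:ℕ) < m), w k)
        (fun m => ∑ k ∈ A.filter (fun k : Fin n => (k:ℕ) < m), w k)
      · exact hpre0 B
      · exact hpre0 A
      · exact fun l l' h => hpremono A l l' h
      · exact fun m => hprestep B m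
      · show (∑ k ∈ A.filter (fun k : Fin n => (k:ℕ) < n), w k) + 1
            ≤ (∑ k ∈ B.filter (fun k : Fin n => (k:ℕ) < n), w k) + wmax
        rw [hpreN A, hpreN B]
        omega
      · exact fun m m' l l' c h1 h2 h3 h4 h5 => hNS l l' m m' c h2 h1 h3 h5 h4
      · exact hVgen A
    have hBcard : B.card ≤ wmax - 1 := by
      rw [hcardgen B]
      apply pigeon wmax n (fun m => ∑ k ∈ A.filter (fun k : Fin n => (k:ℕ) < m), w k)
        (fun m => ∑ k ∈ B.filter (fun k : Fin n => (k:ℕ) < m), w k)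
      · exact hpre0 A
      · exact hpre0 B
      · exact fun l l' h => hpremono B l l' h
      · exact fun m => hprestep A m
      · show (∑ k ∈ B.filter (fun k : Fin n => (k:ℕ) < n), w k) + 1
            ≤ (∑ k ∈ A.filter (fun k : Fin n => (k:ℕ) < n), w k) + wmax
        rw [hpreN A, hpreN B]
        exact hBbound
      · exact fun m m' l l' c h1 h2 h3 h4 h5 => hNS m m' l l' c h1 h2 h3 h4 h5
      · exact hVgen B
    refine ⟨fun i => (z i : ℕ), fun i => hx1 i, hzfeas, ?_, ?_⟩
    · intro y hy hyW
      exact le_trans (hopt y hy hyW) (le_of_eq hzM.symm)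
    · show (∑ i, |(g i : ℤ) - ((z i : ℕ) : ℤ)|) ≤ 2 * (wmax : ℤ) - 1
      rw [hdist]
      omega
end

section
/- Consider a 0-1-Knapsack instance with strictly decreasing profit-to-weight ratios, its maximal prefix solution g, and a nonempty set U ⊆ {1,…,n}, and let m, 𝒲, J, J⁻, J⁺, I⁻, I⁺, I, Δ be as constructed by the single-step procedure. Then |supp(w(I))|·Δ ≤ 300000000·log³(2n)·w_max². -/
/-- Lemma 4.2: support bound for a single step.
Consider a 0-1-Knapsack instance with strictly decreasing profit-to-weight ratios, its
maximal prefix solution `g`, and a nonempty set `U ⊆ {1,…,n}`. Let `m, Ws, J, J⁻, J⁺,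
I⁻, I⁺, I, Δ` be as constructed by the single-step procedure: `m` is the largest power of
two `≤ 2n` with `Ws_m ≠ ∅`, where `Ws_{m̂} = {wh ∈ [wmax] : m̂/2 < #{i ∈ U : w i = wh} ≤ m̂}`;
`Ws := Ws_m`; `J = {i ∈ U : w i ∈ Ws}` split into `J⁻` (picked by `g`) and `J⁺` (unpicked);
`I⁻` is the `⌈|J⁻|/2⌉` smallest indices of `J⁻`, `I⁺` the `⌈|J⁺|/2⌉` largest indices of
`J⁺`; `I` the larger of `I⁻, I⁺`; `Δ = 36000000·log³(2n)·m·wmax²/|I|`.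
Then `|supp(w(I))|·Δ ≤ 300000000·log³(2n)·wmax²`. (`log` is the base-2 logarithm.) -/
theorem stmt9 (n wmax W : ℕ) (hn : 1 ≤ n) (w p : Fin n → ℕ)
    (hw1 : ∀ i, 1 ≤ w i) (hw2 : ∀ i, w i ≤ wmax) (hp : ∀ i, 1 ≤ p i)
    (hratio : ∀ i j : Fin n, i < j → p i * w j > p j * w i)
    -- maximal prefix solution g
    (t : ℕ) (ht : t ≤ n)
    (htfeas : ∑ i ∈ Finset.univ.filter (fun i : Fin n => (i : ℕ) < t), w i ≤ W)
    (htmax : ∀ t' ≤ n,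
      (∑ i ∈ Finset.univ.filter (fun i : Fin n => (i : ℕ) < t'), w i ≤ W) → t' ≤ t)
    (g : Fin n → ℕ) (hg : ∀ i : Fin n, g i = if (i : ℕ) < t then 1 else 0)
    -- the single-step construction on U
    (U : Finset (Fin n)) (hU : U.Nonempty)
    (m : ℕ) (hmpow : ∃ k : ℕ, m = 2 ^ k) (hmle : m ≤ 2 * n)
    (Ws : Finset ℕ)
    (hWs : ∀ wh : ℕ, wh ∈ Ws ↔ 1 ≤ wh ∧ wh ≤ wmax ∧
      m < 2 * (U.filter fun i => w i = wh).card ∧ (U.filter fun i => w i = wh).card ≤ m)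
    (hWsne : Ws.Nonempty)
    (hmmax : ∀ m' : ℕ, (∃ k : ℕ, m' = 2 ^ k) → m' ≤ 2 * n → m < m' →
      ¬ ∃ wh : ℕ, 1 ≤ wh ∧ wh ≤ wmax ∧
        m' < 2 * (U.filter fun i => w i = wh).card ∧ (U.filter fun i => w i = wh).card ≤ m')
    (J Jm Jp Im Ip I : Finset (Fin n))
    (hJ : J = U.filter fun i => w i ∈ Ws)
    (hJm : Jm = J.filter fun i => g i = 1)
    (hJp : Jp = J.filter fun i => g i = 0)
    (hImsub : Im ⊆ Jm) (hImcard : Im.card = (Jm.card + 1) / 2)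
    (hImlow : ∀ i ∈ Im, ∀ j ∈ Jm \ Im, i < j)
    (hIpsub : Ip ⊆ Jp) (hIpcard : Ip.card = (Jp.card + 1) / 2)
    (hIphigh : ∀ i ∈ Ip, ∀ j ∈ Jp \ Ip, j < i)
    (hI : I = Im ∨ I = Ip) (hIcard : I.card = max Im.card Ip.card)
    (Δ : ℝ) (hΔ : Δ = 36000000 * (Real.logb 2 (2 * n)) ^ 3 * m * wmax ^ 2 / I.card) :
    ((I.image w).card : ℝ) * Δ ≤ 300000000 * (Real.logb 2 (2 * n)) ^ 3 * wmax ^ 2 := by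
  -- key natural-number facts
  have hm1 : 1 ≤ m := by obtain ⟨k, rfl⟩ := hmpow; exact Nat.one_le_two_pow
  -- J as a disjoint union over weights in Ws
  have hJbi : J = Ws.biUnion (fun wh => U.filter fun i => w i = wh) := by
    ext i
    simp only [hJ, Finset.mem_filter, Finset.mem_biUnion]
    constructor
    · rintro ⟨hiU, hws⟩; exact ⟨w i, hws, hiU, rfl⟩
    · rintro ⟨wh, hwh, hiU, rfl⟩; exact ⟨hiU, hwh⟩
  have hdisj : ∀ a ∈ Ws, ∀ b ∈ Ws, a ≠ b →
      Disjoint (U.filter fun i => w i = a) (U.filter fun i => w i = b) := by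
    intro a _ b _ hab
    refine Finset.disjoint_left.2 ?_
    intro i hia hib
    simp only [Finset.mem_filter] at hia hib
    exact hab (hia.2 ▸ hib.2)
  have hJcard : J.card = ∑ wh ∈ Ws, (U.filter fun i => w i = wh).card := by
    rw [hJbi, Finset.card_biUnion hdisj]
  have hWsm : Ws.card * m ≤ 2 * J.card := by
    calc Ws.card * m ≤ ∑ wh ∈ Ws, 2 * (U.filter fun i => w i = wh).card := by
          refine Finset.card_nsmul_le_sum Ws _ m ?_
          intro wh hwh
          exact le_of_lt ((hWs wh).1 hwh).2.2.1
      _ = 2 * J.card := by rw [hJcard, Finset.mul_sum]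
  -- image of w on I is contained in Ws
  have hIsubJ : I ⊆ J := by
    rcases hI with rfl | rfl
    · exact hImsub.trans (hJm ▸ Finset.filter_subset _ _)
    · exact hIpsub.trans (hJp ▸ Finset.filter_subset _ _)
  have himg : I.image w ⊆ Ws := by
    intro wh hwh
    obtain ⟨i, hi, rfl⟩ := Finset.mem_image.1 hwh
    have := hIsubJ hi
    rw [hJ, Finset.mem_filter] at this
    exact this.2
  have himgcard : (I.image w).card ≤ Ws.card := Finset.card_le_card himg
  -- J splits into Jm and Jp
  have hsplit : Jm.card + Jp.card = J.card := by
    rw [hJm, hJp]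
    have : (J.filter fun i => g i = 0) = J.filter fun i => ¬ g i = 1 := by
      apply Finset.filter_congr
      intro i _
      rw [hg i]; by_cases h : (i : ℕ) < t <;> simp [h]
    rw [this]
    exact Finset.card_filter_add_card_filter_not _
  -- I.card bounds
  have h2I : J.card ≤ 4 * I.card := by
    have hm' : Jm.card ≤ 2 * Im.card := by
      rw [hImcard]; omega
    have hp' : Jp.card ≤ 2 * Ip.card := by
      rw [hIpcard]; omega
    have := hIcard
    omega
  have hkey : (I.image w).card * m ≤ 8 * I.card := by
    calc (I.image w).card * m ≤ Ws.card * m := Nat.mul_le_mul_right _ himgcard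
      _ ≤ 2 * J.card := hWsm
      _ ≤ 8 * I.card := by omega
  -- I is nonempty
  have hJne : 1 ≤ J.card := by
    obtain ⟨wh, hwh⟩ := hWsne
    have h := (hWs wh).1 hwh
    have hc : 1 ≤ (U.filter fun i => w i = wh).card := by omega
    obtain ⟨i, hi⟩ := Finset.card_pos.1 hc
    refine Finset.card_pos.2 ⟨i, ?_⟩
    rw [hJ, Finset.mem_filter]
    rw [Finset.mem_filter] at hi
    exact ⟨hi.1, hi.2 ▸ hwh⟩
  have hIpos : 0 < I.card := by
    rw [hIcard, hImcard, hIpcard]; omega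
  -- real arithmetic
  set L : ℝ := Real.logb 2 (2 * n) with hL
  have hL1 : (1 : ℝ) ≤ L := by
    rw [hL]
    have h2 : (1 : ℝ) = Real.logb 2 2 := (Real.logb_self_eq_one (by norm_num)).symm
    rw [h2]
    have hn' : (1 : ℝ) ≤ (n : ℝ) := by exact_mod_cast hn
    exact Real.logb_le_logb_of_le (by norm_num) (by norm_num) (by linarith)
  have hwmax0 : (0 : ℝ) ≤ (wmax : ℝ) ^ 2 := by positivity
  have hL0 : (0 : ℝ) ≤ L ^ 3 := by positivity
  have hIc : (0 : ℝ) < (I.card : ℝ) := by exact_mod_cast hIpos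
  have hkeyR : ((I.image w).card : ℝ) * m ≤ 8 * I.card := by exact_mod_cast hkey
  rw [hΔ]
  rw [mul_div_assoc', div_le_iff₀ hIc]
  have h1 : (0:ℝ) ≤ L ^ 3 * wmax ^ 2 := mul_nonneg hL0 hwmax0
  nlinarith [mul_le_mul_of_nonneg_left hkeyR (by linarith : (0:ℝ) ≤ 36000000 * (L^3 * wmax^2))]
end

section
/- Let h ≥ 1 and ℓ ≥ 0 be integers and let y : ℤ → ℤ ∪ {−∞} be a function such that y(k) is finite if and only if k = i·h for some integer 0 ≤ i ≤ ℓ, and such that y(i·h) + y(i·h) ≥ y((i−1)·h) + y((i+1)·h) for all integers 1 ≤ i ≤ ℓ−1. Let x : ℤ → ℤ ∪ {−∞} be an arbitrary function and let r ∈ ℤ. Define M(i,j) := x(j·h + r) + y((i−j)·h) for all i, j ∈ ℤ, where addition in ℤ ∪ {−∞} satisfies a + (−∞) = −∞. Then M is inverse-Monge, i.e., M(i,j) + M(i+1,j+1) ≥ M(i+1,j) + M(i,j+1) for all i, j ∈ ℤ. -/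
/-- the matrix in the proof of Lemma 5.2 is inverse-Monge.
Let `h ≥ 1` and `ℓ ≥ 0` be integers and let `y : ℤ → ℤ ∪ {−∞}` be such that `y k` is
finite iff `k = i·h` for some integer `0 ≤ i ≤ ℓ`, and such that
`y(i·h) + y(i·h) ≥ y((i−1)·h) + y((i+1)·h)` for all `1 ≤ i ≤ ℓ−1` (concavity). Let
`x : ℤ → ℤ ∪ {−∞}` be arbitrary and `r : ℤ`, and define
`M i j := x(j·h + r) + y((i−j)·h)`. Then `M` is inverse-Monge:
`M i j + M (i+1) (j+1) ≥ M (i+1) j + M i (j+1)` for all `i, j`. -/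
theorem stmt12 (h ℓ : ℤ) (hh : 1 ≤ h) (hℓ : 0 ≤ ℓ)
    (y : ℤ → WithBot ℤ)
    (hfin : ∀ k : ℤ, y k ≠ ⊥ ↔ ∃ i : ℤ, 0 ≤ i ∧ i ≤ ℓ ∧ k = i * h)
    (hconc : ∀ i : ℤ, 1 ≤ i → i ≤ ℓ - 1 →
      y ((i - 1) * h) + y ((i + 1) * h) ≤ y (i * h) + y (i * h))
    (x : ℤ → WithBot ℤ) (r : ℤ)
    (M : ℤ → ℤ → WithBot ℤ)
    (hM : ∀ i j : ℤ, M i j = x (j * h + r) + y ((i - j) * h)) :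
    ∀ i j : ℤ, M (i + 1) j + M i (j + 1) ≤ M i j + M (i + 1) (j + 1) := by
  have hne : h ≠ 0 := by omega
  -- y(m*h) ≠ ⊥ implies 0 ≤ m ≤ ℓ
  have hrange : ∀ m : ℤ, y (m * h) ≠ ⊥ → 0 ≤ m ∧ m ≤ ℓ := by
    intro m hm
    obtain ⟨i, h0, h1, h2⟩ := (hfin (m * h)).1 hm
    have : m = i := mul_right_cancel₀ hne h2
    omega
  have key : ∀ d : ℤ, y ((d + 1) * h) + y ((d - 1) * h) ≤ y (d * h) + y (d * h) := by
    intro d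
    by_cases hb1 : y ((d + 1) * h) = ⊥
    · simp [hb1]
    by_cases hb2 : y ((d - 1) * h) = ⊥
    · simp [hb2]
    have r1 := hrange _ hb1
    have r2 := hrange _ hb2
    have := hconc d (by omega) (by omega)
    calc y ((d + 1) * h) + y ((d - 1) * h)
        = y ((d - 1) * h) + y ((d + 1) * h) := add_comm _ _
      _ ≤ _ := this
  intro i j
  rw [hM, hM, hM, hM]
  have e1 : i + 1 - j = (i - j) + 1 := by ring
  have e2 : i - (j + 1) = (i - j) - 1 := by ring
  have e3 : i + 1 - (j + 1) = i - j := by ring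
  rw [e1, e2, e3]
  calc x (j * h + r) + y ((i - j + 1) * h) + (x ((j + 1) * h + r) + y ((i - j - 1) * h))
      = x (j * h + r) + x ((j + 1) * h + r) + (y ((i - j + 1) * h) + y ((i - j - 1) * h)) := by
        abel
    _ ≤ x (j * h + r) + x ((j + 1) * h + r) + (y ((i - j) * h) + y ((i - j) * h)) :=
        add_le_add_right (key (i - j)) _
    _ = x (j * h + r) + y ((i - j) * h) + (x ((j + 1) * h + r) + y ((i - j) * h)) := by abel
end

section
/- Consider a 0-1-Knapsack instance with non-increasing profit-to-weight ratios whose weights satisfy w_i ≤ w_max for all i, and let g be its maximal prefix solution. For each weight ŵ ∈ {1,…,w_max}, list the items of weight ŵ in increasing index order as i_1 < … < i_ℓ and let t(ŵ) := |{j : g_{i_j} = 1}| (so g selects exactly i_1,…,i_{t(ŵ)} among them). Then there exists an optimal solution x* such that for every weight ŵ and every position j among the items of weight ŵ: if j ≤ t(ŵ) − 2·w_max then x*_{i_j} = 1, and if j > t(ŵ) + 2·w_max then x*_{i_j} = 0. -/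
open Finset

private lemma sum_toFinset_nodup {α : Type*} [DecidableEq α] (f : α → ℕ) :
    ∀ (l : List α), l.Nodup → ∑ i ∈ l.toFinset, f i = (l.map f).sum := by
  intro l hl
  induction l with
  | nil => simp
  | cons a l ih =>
      simp only [List.toFinset_cons, List.map_cons, List.sum_cons]
      rw [Finset.sum_insert (by simp [List.nodup_cons.mp hl |>.1]), ih (List.nodup_cons.mp hl).2]

private lemma equal_pair {n wmax : ℕ} (hwmax : 1 ≤ wmax) (w : Fin n → ℕ)
    (hw2 : ∀ i, w i ≤ wmax) (S : Finset (Fin n)) (c : ℕ) (hc : 1 ≤ c)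
    (hS : (wmax + 1) * c ≤ ∑ i ∈ S, w i) :
    ∃ B' ⊆ S, ∃ q, 1 ≤ q ∧ q ≤ wmax + 1 ∧ ∑ i ∈ B', w i = q * c := by
  classical
  set l := S.sort (· ≤ ·) with hldef
  have hnd : l.Nodup := S.sort_nodup _
  have hlS : l.toFinset = S := S.sort_toFinset _
  set ps : ℕ → ℕ := fun k => ((l.take k).map w).sum with hpsdef
  have hpslen : ps l.length = ∑ i ∈ S, w i := by
    rw [← hlS, sum_toFinset_nodup w l hnd]
    show ((l.take l.length).map w).sum = _
    rw [List.take_length]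
  set K : ℕ → ℕ := fun m => Nat.findGreatest (fun k => ps k ≤ m) l.length with hKdef
  have hKle : ∀ m, ps (K m) ≤ m := by
    intro m
    have h0 : ps 0 ≤ m := by
      show ((l.take 0).map w).sum ≤ m
      simp
    exact Nat.findGreatest_spec (P := fun k => ps k ≤ m) (Nat.zero_le l.length) h0
  have hKbd : ∀ m, K m ≤ l.length := fun m => Nat.findGreatest_le _
  have hKmono : ∀ {m m' : ℕ}, m ≤ m' → K m ≤ K m' := fun {m m'} h =>
    Nat.findGreatest_mono (fun k hk => le_trans hk h) le_rfl
  have hstep : ∀ k, k < l.length → ps (k + 1) ≤ ps k + wmax := by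
    intro k hk
    have htk : l.take (k + 1) = l.take k ++ [l[k]] := by
      rw [List.take_succ, List.getElem?_eq_getElem hk]; rfl
    have : ps (k + 1) = ps k + w l[k] := by
      show ((l.take (k+1)).map w).sum = ((l.take k).map w).sum + w l[k]
      rw [htk, List.map_append, List.sum_append]
      simp
    rw [this]; exact Nat.add_le_add_left (hw2 _) _
  have hgap : ∀ m, m ≤ ∑ i ∈ S, w i → m < ps (K m) + wmax := by
    intro m hm
    rcases eq_or_lt_of_le (hKbd m) with he | hl2
    · have : m ≤ ps (K m) := by rw [he, hpslen]; exact hm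
      omega
    · have h1 : ¬ ps (K m + 1) ≤ m := by
        apply Nat.findGreatest_is_greatest (P := fun k => ps k ≤ m) (n := l.length) _ hl2
        exact Nat.lt_succ_self (K m)
      have h2 := hstep (K m) hl2
      omega
  have hsumtake : ∀ k, ∑ i ∈ (l.take k).toFinset, w i = ps k := fun k =>
    sum_toFinset_nodup w _ ((List.take_sublist k l).nodup hnd)
  have main : ∀ j j' : ℕ, 1 ≤ j → j' ≤ wmax + 1 → j < j' →
      j * c - ps (K (j * c)) = j' * c - ps (K (j' * c)) →
      ∃ B' ⊆ S, ∃ q, 1 ≤ q ∧ q ≤ wmax + 1 ∧ ∑ i ∈ B', w i = q * c := by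
    intro j j' hj1 hj2 hjj' heq
    set m := j * c with hm
    set m' := j' * c with hm'
    have hmm' : m ≤ m' := Nat.mul_le_mul_right c (le_of_lt hjj')
    have hnest : (l.take (K m)).toFinset ⊆ (l.take (K m')).toFinset := by
      intro x hx
      have h1 : l.take (K m) = (l.take (K m')).take (K m) := by
        rw [List.take_take, min_eq_left (hKmono hmm')]
      rw [List.mem_toFinset] at hx ⊢
      rw [h1] at hx
      exact List.take_subset _ _ hx
    refine ⟨(l.take (K m')).toFinset \ (l.take (K m)).toFinset, ?_, j' - j, by omega, by omega, ?_⟩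
    · intro x hx
      rw [Finset.mem_sdiff, List.mem_toFinset] at hx
      rw [← hlS, List.mem_toFinset]
      exact List.take_subset _ _ hx.1
    · have hsd := Finset.sum_sdiff (f := w) hnest
      rw [hsumtake, hsumtake] at hsd
      have e1 : ps (K m) ≤ m := hKle m
      have e2 : ps (K m') ≤ m' := hKle m'
      have hbridge : j * c + (j' - j) * c = j' * c := by
        rw [← Nat.add_mul]; congr 1; omega
      omega
  have maps : ∀ j ∈ Finset.Icc 1 (wmax + 1),
      (j * c - ps (K (j * c))) ∈ Finset.range wmax := by
    intro j hj
    rw [Finset.mem_Icc] at hj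
    rw [Finset.mem_range]
    have hle : j * c ≤ ∑ i ∈ S, w i := le_trans (Nat.mul_le_mul_right c hj.2) hS
    have h1 := hgap (j * c) hle
    have h2 := hKle (j * c)
    omega
  obtain ⟨j, hj, j', hj', hne, heq⟩ :=
    Finset.exists_ne_map_eq_of_card_lt_of_maps_to (by simp) maps
  rw [Finset.mem_Icc] at hj hj'
  rcases hne.lt_or_gt with h | h
  · exact main j j' hj.1 hj'.2 h heq
  · exact main j' j hj'.1 hj.2 h heq.symm

set_option maxHeartbeats 4000000 in
/-- correctness of the greedy pruning in Lemma 6.1.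
Consider a 0-1-Knapsack instance with non-increasing profit-to-weight ratios and weights
`1 ≤ w i ≤ wmax`, and let `g` be its maximal prefix solution. For an item `i`, let
`rank i := #{j : w j = w i ∧ j ≤ i}` be its (1-indexed) position among the items of its
weight, and `pick (w i) := #{j : w j = w i ∧ g j = 1}` the number of items of this weight
picked by `g`. Then there exists an optimal solution `x` such that for every item `i`:
if `rank i ≤ pick (w i) − 2·wmax` then `x i = 1`, and if `rank i > pick (w i) + 2·wmax`
then `x i = 0`. -/
theorem stmt13 (n : ℕ) (hn : 1 ≤ n) (wmax : ℕ) (w p : Fin n → ℕ) (W : ℕ)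
    (hw1 : ∀ i, 1 ≤ w i) (hw2 : ∀ i, w i ≤ wmax) (hp : ∀ i, 1 ≤ p i)
    (hratio : ∀ i j : Fin n, i ≤ j → p i * w j ≥ p j * w i)
    -- maximal prefix solution g
    (t : ℕ) (ht : t ≤ n)
    (htfeas : ∑ i ∈ Finset.univ.filter (fun i : Fin n => (i : ℕ) < t), w i ≤ W)
    (htmax : ∀ t' ≤ n,
      (∑ i ∈ Finset.univ.filter (fun i : Fin n => (i : ℕ) < t'), w i ≤ W) → t' ≤ t)
    (g : Fin n → ℕ) (hg : ∀ i : Fin n, g i = if (i : ℕ) < t then 1 else 0) :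
    ∃ x : Fin n → ℕ, (∀ i, x i ≤ 1) ∧ (∑ i, w i * x i ≤ W) ∧
      (∀ y : Fin n → ℕ, (∀ i, y i ≤ 1) → ∑ i, w i * y i ≤ W →
        ∑ i, p i * y i ≤ ∑ i, p i * x i) ∧
      (∀ i : Fin n,
        ((Finset.univ.filter fun j : Fin n => w j = w i ∧ j ≤ i).card + 2 * wmax ≤
            (Finset.univ.filter fun j : Fin n => w j = w i ∧ g j = 1).card →
          x i = 1) ∧
        ((Finset.univ.filter fun j : Fin n => w j = w i ∧ j ≤ i).card >
            (Finset.univ.filter fun j : Fin n => w j = w i ∧ g j = 1).card + 2 * wmax →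
          x i = 0)) := by
  classical
  have hwmax : 1 ≤ wmax := le_trans (hw1 ⟨0, hn⟩) (hw2 ⟨0, hn⟩)
  set G : Finset (Fin n) := Finset.univ.filter (fun i : Fin n => (i : ℕ) < t) with hGdef
  set wS : Finset (Fin n) → ℕ := fun X => ∑ i ∈ X, w i with hwSdef
  set pS : Finset (Fin n) → ℕ := fun X => ∑ i ∈ X, p i with hpSdef
  set σS : Finset (Fin n) → ℕ := fun X => ∑ i ∈ X, (i : ℕ) with hσSdef
  set Φ : Finset (Fin n) → ℕ := fun X => (G \ X).card + (X \ G).card with hΦdef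
  have hcardw : ∀ S : Finset (Fin n), S.card ≤ wS S := by
    intro S
    rw [Finset.card_eq_sum_ones]
    exact Finset.sum_le_sum (fun i _ => hw1 i)
  have hcardp : ∀ S : Finset (Fin n), S.card ≤ pS S := by
    intro S
    rw [Finset.card_eq_sum_ones]
    exact Finset.sum_le_sum (fun i _ => hp i)
  have hGfeas : wS G ≤ W := htfeas
  -- choose the optimal solution X with minimal (Φ, σ)
  set Feas : Finset (Finset (Fin n)) :=
    Finset.univ.filter (fun X => wS X ≤ W) with hFeasdef
  have hGF : G ∈ Feas := by simp [hFeasdef, hGfeas]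
  obtain ⟨X₀, hX₀F, hX₀max⟩ := Finset.exists_max_image Feas pS ⟨G, hGF⟩
  set Opt := Feas.filter (fun Y => pS X₀ ≤ pS Y) with hOptdef
  have hX₀O : X₀ ∈ Opt := by simp [hOptdef, hX₀F]
  obtain ⟨X₁, hX₁O, hX₁min⟩ := Finset.exists_min_image Opt Φ ⟨X₀, hX₀O⟩
  set Opt2 := Opt.filter (fun Y => Φ Y ≤ Φ X₁) with hOpt2def
  have hX₁O2 : X₁ ∈ Opt2 := by simp [hOpt2def, hX₁O]
  obtain ⟨X, hXO2, hXσ0⟩ := Finset.exists_min_image Opt2 σS ⟨X₁, hX₁O2⟩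
  have hXO : X ∈ Opt := (Finset.mem_filter.mp hXO2).1
  have hXfeas : wS X ≤ W := by
    have := (Finset.mem_filter.mp hXO).1
    simpa [hFeasdef] using this
  have hXP : pS X₀ ≤ pS X := (Finset.mem_filter.mp hXO).2
  have hXΦ1 : Φ X ≤ Φ X₁ := (Finset.mem_filter.mp hXO2).2
  have hopt : ∀ Y : Finset (Fin n), wS Y ≤ W → pS Y ≤ pS X := by
    intro Y hY
    exact le_trans (hX₀max Y (by simp [hFeasdef, hY])) hXP
  have hΦmin : ∀ Y : Finset (Fin n), wS Y ≤ W → pS X ≤ pS Y → Φ X ≤ Φ Y := by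
    intro Y h1 h2
    have hYO : Y ∈ Opt := by
      simp only [hOptdef, Finset.mem_filter]
      exact ⟨by simp [hFeasdef, h1], le_trans hXP h2⟩
    exact le_trans hXΦ1 (hX₁min Y hYO)
  have hσmin : ∀ Y : Finset (Fin n), wS Y ≤ W → pS X ≤ pS Y → Φ Y ≤ Φ X →
      σS X ≤ σS Y := by
    intro Y h1 h2 h3
    have hYO : Y ∈ Opt := by
      simp only [hOptdef, Finset.mem_filter]
      exact ⟨by simp [hFeasdef, h1], le_trans hXP h2⟩
    have hYO2 : Y ∈ Opt2 := by
      simp only [hOpt2def, Finset.mem_filter]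
      exact ⟨hYO, le_trans h3 hXΦ1⟩
    exact hXσ0 Y hYO2
  -- the disagreement sets
  set A : Finset (Fin n) := G \ X with hAdef
  set B : Finset (Fin n) := X \ G with hBdef
  have hmemG : ∀ x : Fin n, x ∈ G ↔ (x : ℕ) < t := by
    intro x; simp [hGdef]
  have hmemA : ∀ x : Fin n, x ∈ A ↔ ((x : ℕ) < t ∧ x ∉ X) := by
    intro x; simp [hAdef, hmemG]
  have hmemB : ∀ x : Fin n, x ∈ B ↔ (x ∈ X ∧ t ≤ (x : ℕ)) := by
    intro x; simp [hBdef, hGdef]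
  -- generic swap sum identity
  have hsum : ∀ (v : Fin n → ℕ) (A' B' : Finset (Fin n)), A' ⊆ A → B' ⊆ B →
      ∑ i ∈ ((X \ B') ∪ A'), v i + ∑ i ∈ B', v i = ∑ i ∈ X, v i + ∑ i ∈ A', v i := by
    intro v A' B' hA' hB'
    have hB'X : B' ⊆ X := fun x hx => ((hmemB x).mp (hB' hx)).1
    have hd : Disjoint (X \ B') A' := by
      rw [Finset.disjoint_right]
      intro a ha hax
      exact ((hmemA a).mp (hA' ha)).2 (Finset.mem_sdiff.mp hax).1
    rw [Finset.sum_union hd]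
    have h1 := Finset.sum_sdiff (f := v) hB'X
    omega
  -- swap identity for Φ
  have hΦswap : ∀ (A' B' : Finset (Fin n)), A' ⊆ A → B' ⊆ B →
      Φ ((X \ B') ∪ A') + A'.card + B'.card = Φ X := by
    intro A' B' hA' hB'
    have h1 : G \ ((X \ B') ∪ A') = A \ A' := by
      ext x
      simp only [Finset.mem_sdiff, Finset.mem_union, hAdef]
      have hxB' : x ∈ B' → x ∉ G := fun hx => (Finset.mem_sdiff.mp (hB' hx)).2
      have hxA' : x ∈ A' → x ∈ G ∧ x ∉ X :=
        fun hx => Finset.mem_sdiff.mp (hA' hx)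
      tauto
    have h2 : ((X \ B') ∪ A') \ G = B \ B' := by
      ext x
      simp only [Finset.mem_sdiff, Finset.mem_union, hBdef]
      have hxB' : x ∈ B' → x ∈ X := fun hx => (Finset.mem_sdiff.mp (hB' hx)).1
      have hxA' : x ∈ A' → x ∈ G ∧ x ∉ X :=
        fun hx => Finset.mem_sdiff.mp (hA' hx)
      tauto
    simp only [hΦdef, h1, h2]
    rw [← hAdef, ← hBdef]
    rw [Finset.card_sdiff_of_subset hA', Finset.card_sdiff_of_subset hB']
    have := Finset.card_le_card hA'
    have := Finset.card_le_card hB'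
    omega
  -- cross ratio estimate
  have hcross : ∀ (A' B' : Finset (Fin n)), A' ⊆ A → B' ⊆ B →
      pS B' * wS A' ≤ pS A' * wS B' := by
    intro A' B' hA' hB'
    simp only [hpSdef, hwSdef]
    rw [Finset.sum_mul_sum, Finset.sum_mul_sum]
    rw [Finset.sum_comm]
    refine Finset.sum_le_sum (fun a ha => Finset.sum_le_sum (fun b hb => ?_))
    have hat : (a : ℕ) < t := ((hmemA a).mp (hA' ha)).1
    have hbt : t ≤ (b : ℕ) := ((hmemB b).mp (hB' hb)).2
    exact hratio a b (by rw [Fin.le_def]; omega)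
  -- main exchange lemma
  have hS1 : ∀ (A' B' : Finset (Fin n)), A' ⊆ A → B' ⊆ B → wS A' = wS B' →
      1 ≤ A'.card → False := by
    intro A' B' hA' hB' hww hcA
    have hwA'pos : 1 ≤ wS A' := le_trans hcA (hcardw A')
    have hpB'A' : pS B' ≤ pS A' := by
      have h := hcross A' B' hA' hB'
      rw [hww] at h
      exact Nat.le_of_mul_le_mul_right h (by omega)
    have hw' := hsum w A' B' hA' hB'
    have hp' := hsum p A' B' hA' hB'
    have hΦ' := hΦswap A' B' hA' hB'
    have hYfeas : wS ((X \ B') ∪ A') ≤ W := by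
      have hXf := hXfeas
      simp only [hwSdef] at hXf hww ⊢
      omega
    have hYp : pS X ≤ pS ((X \ B') ∪ A') := by
      simp only [hpSdef] at hpB'A' ⊢
      omega
    have hfin := hΦmin _ hYfeas hYp
    omega
  -- B = ∅ → A = ∅
  have hBA : B = ∅ → A = ∅ := by
    intro hB
    by_contra hA
    have hXG : (X \ B) ∪ A = G := by
      ext x
      simp only [Finset.mem_union, Finset.mem_sdiff, hAdef, hBdef]
      tauto
    have hp' := hsum p A B (le_refl A) (le_refl B)
    rw [hXG, hB] at hp'
    simp only [Finset.sum_empty] at hp'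
    have hApos : 1 ≤ pS A := by
      have : 1 ≤ A.card := Finset.card_pos.mpr (Finset.nonempty_iff_ne_empty.mpr hA)
      exact le_trans this (hcardp A)
    have := hopt G hGfeas
    simp only [hpSdef] at *
    omega
  -- if A ≠ ∅ then wS A < wS B
  have hAB : A ≠ ∅ → wS A < wS B := by
    intro hA
    have hB : B ≠ ∅ := fun h => hA (hBA h)
    by_contra hle
    push_neg at hle
    have hBpos : 1 ≤ wS B := by
      have : 1 ≤ B.card := Finset.card_pos.mpr (Finset.nonempty_iff_ne_empty.mpr hB)
      exact le_trans this (hcardw B)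
    have hpAB : pS B ≤ pS A := by
      have h := hcross A B (le_refl A) (le_refl B)
      have h2 : pS B * wS B ≤ pS A * wS B :=
        le_trans (Nat.mul_le_mul_left _ hle) h
      exact Nat.le_of_mul_le_mul_right h2 (by omega)
    have hXG : (X \ B) ∪ A = G := by
      ext x
      simp only [Finset.mem_union, Finset.mem_sdiff, hAdef, hBdef]
      tauto
    have hp' := hsum p A B (le_refl A) (le_refl B)
    rw [hXG] at hp'
    have hGp : pS X ≤ pS G := by simp only [hpSdef] at *; omega
    have hΦ' := hΦswap A B (le_refl A) (le_refl B)
    rw [hXG] at hΦ'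
    have hBc : 1 ≤ B.card := Finset.card_pos.mpr (Finset.nonempty_iff_ne_empty.mpr hB)
    have hΦG : Φ G = 0 := by simp [hΦdef]
    have := hΦmin G hGfeas hGp
    omega
  -- class-prefix property
  have hpre : ∀ i j : Fin n, w i = w j → i ≤ j → j ∈ X → i ∈ X := by
    intro i j hwij hij hjX
    by_contra hiX
    have hijne : i ≠ j := fun h => hiX (h ▸ hjX)
    have hijlt : (i : ℕ) < (j : ℕ) := by
      rw [Fin.le_def] at hij
      rcases lt_or_eq_of_le hij with h | h
      · exact h
      · exact absurd (Fin.ext h) hijne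
    obtain ⟨Y, hYdef⟩ : ∃ Y, Y = insert i (X.erase j) := ⟨_, rfl⟩
    have hiXe : i ∉ X.erase j := fun h => hiX (Finset.mem_of_mem_erase h)
    have hsum2 : ∀ v : Fin n → ℕ, ∑ x ∈ Y, v x + v j = ∑ x ∈ X, v x + v i := by
      intro v
      rw [hYdef, Finset.sum_insert hiXe]
      
      have := Finset.sum_erase_add X v hjX
      omega
    have hYfeas : wS Y ≤ W := by
      have := hsum2 w
      simp only [hwSdef] at *
      omega
    have hpij : p j ≤ p i := by
      have h := hratio i j hij
      rw [hwij] at h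
      exact Nat.le_of_mul_le_mul_right h (hw1 j)
    have hYp : pS X ≤ pS Y := by
      have := hsum2 p
      simp only [hpSdef] at *
      omega
    have hYσ : σS Y < σS X := by
      have := hsum2 (fun x => (x : ℕ))
      simp only [hσSdef] at *
      omega
    have hYΦ : Φ Y ≤ Φ X := by
      simp only [hΦdef]
      by_cases hit : (i : ℕ) < t
      · by_cases hjt : (j : ℕ) < t
        · have hiA : i ∈ G \ X := Finset.mem_sdiff.mpr ⟨(hmemG i).mpr hit, hiX⟩
          have h1 : G \ Y = insert j ((G \ X).erase i) := by
            ext x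
            rcases eq_or_ne x i with rfl | hxi
            · simp_all [hYdef, hmemG]
            · rcases eq_or_ne x j with rfl | hxj
              · simp_all [hYdef, hmemG]
              · simp_all [hYdef, hmemG, hxi, hxj]
          have h2 : Y \ G = X \ G := by
            ext x
            rcases eq_or_ne x i with rfl | hxi
            · simp_all [hYdef, hmemG]
            · rcases eq_or_ne x j with rfl | hxj
              · simp_all [hYdef, hmemG]
              · simp_all [hYdef, hmemG, hxi, hxj]
          have hjm : j ∉ (G \ X).erase i := by
            simp [Finset.mem_erase, Finset.mem_sdiff, hjX]
          have hc1 : 1 ≤ (G \ X).card := Finset.card_pos.mpr ⟨i, hiA⟩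
          rw [h1, h2, Finset.card_insert_of_notMem hjm, Finset.card_erase_of_mem hiA]
          omega
        · have h1 : G \ Y = (G \ X).erase i := by
            ext x
            rcases eq_or_ne x i with rfl | hxi
            · simp_all [hYdef, hmemG]
            · rcases eq_or_ne x j with rfl | hxj
              · simp_all [hYdef, hmemG]
              · simp_all [hYdef, hmemG, hxi, hxj]
          have h2 : Y \ G = (X \ G).erase j := by
            ext x
            rcases eq_or_ne x i with rfl | hxi
            · simp_all [hYdef, hmemG]
            · rcases eq_or_ne x j with rfl | hxj
              · simp_all [hYdef, hmemG]
              · simp_all [hYdef, hmemG, hxi, hxj]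
          rw [h1, h2]
          exact Nat.add_le_add (Finset.card_le_card (Finset.erase_subset _ _))
            (Finset.card_le_card (Finset.erase_subset _ _))
      · have hjt : ¬ (j : ℕ) < t := fun h => hit (lt_trans hijlt h)
        have hjB : j ∈ X \ G := by
          simp only [Finset.mem_sdiff, hmemG]
          exact ⟨hjX, hjt⟩
        have h1 : G \ Y = G \ X := by
          ext x
          rcases eq_or_ne x i with rfl | hxi
          · simp_all [hYdef, hmemG]
          · rcases eq_or_ne x j with rfl | hxj
            · simp_all [hYdef, hmemG]
            · simp_all [hYdef, hmemG, hxi, hxj]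
        have h2 : Y \ G = insert i ((X \ G).erase j) := by
          ext x
          rcases eq_or_ne x i with rfl | hxi
          · simp_all [hYdef, hmemG]
          · rcases eq_or_ne x j with rfl | hxj
            · simp_all [hYdef, hmemG]
            · simp_all [hYdef, hmemG, hxi, hxj]
        have him : i ∉ (X \ G).erase j := by
          simp only [Finset.mem_erase, Finset.mem_sdiff]
          intro h
          exact hiX h.2.1
        have hc1 : 1 ≤ (X \ G).card := Finset.card_pos.mpr ⟨j, hjB⟩
        rw [h1, h2, Finset.card_insert_of_notMem him, Finset.card_erase_of_mem hjB]
        omega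
    have := hσmin Y hYfeas hYp hYΦ
    omega
  -- L3 : few class items missing from the prefix
  have hclassw : ∀ (c : ℕ) (S T : Finset (Fin n)), S ⊆ T.filter (fun j => w j = c) →
      wS S = S.card * c := by
    intro c S T hS
    simp only [hwSdef]
    rw [Finset.sum_congr rfl (fun j hj => (Finset.mem_filter.mp (hS hj)).2)]
    rw [Finset.sum_const, smul_eq_mul]
  have hL3 : ∀ c : ℕ, 1 ≤ c → (A.filter (fun j => w j = c)).card ≤ wmax := by
    intro c hc
    by_contra hbig
    push_neg at hbig
    have hAne : A ≠ ∅ := by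
      intro h
      rw [h] at hbig
      simp [Finset.filter_empty] at hbig
    have hwAB := hAB hAne
    have hwAC : (wmax + 1) * c ≤ wS A := by
      calc (wmax + 1) * c ≤ (A.filter (fun j => w j = c)).card * c :=
            Nat.mul_le_mul_right c (by omega)
        _ = wS (A.filter (fun j => w j = c)) :=
            (hclassw c _ A (le_refl _)).symm
        _ ≤ wS A := Finset.sum_le_sum_of_subset (Finset.filter_subset _ _)
    obtain ⟨B', hB'B, q, hq1, hq2, hB'w⟩ :=
      equal_pair hwmax w hw2 B c hc (le_trans hwAC (le_of_lt hwAB))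
    obtain ⟨A', hA'sub, hA'card⟩ :=
      Finset.exists_subset_card_eq (show q ≤ (A.filter (fun j => w j = c)).card by omega)
    have hA'w : wS A' = q * c := by
      rw [hclassw c A' A hA'sub, hA'card]
    exact hS1 A' B' (subset_trans hA'sub (Finset.filter_subset _ _)) hB'B
      (by rw [hA'w, ← hB'w]) (by omega)
  -- L4 : few class items beyond the prefix
  have hL4 : ∀ c : ℕ, 1 ≤ c → (B.filter (fun j => w j = c)).card ≤ 2 * wmax := by
    intro c hc
    by_contra hbig
    push_neg at hbig
    have hBne : B ≠ ∅ := by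
      intro h
      rw [h] at hbig
      simp [Finset.filter_empty] at hbig
    have htlt : t < n := by
      by_contra h
      push_neg at h
      apply hBne
      apply Finset.eq_empty_iff_forall_notMem.mpr
      intro x hx
      have h1 := ((hmemB x).mp hx).2
      have h2 := x.isLt
      omega
    have hstep : W < wS G + w ⟨t, htlt⟩ := by
      by_contra hle
      push_neg at hle
      have hins : Finset.univ.filter (fun i : Fin n => (i : ℕ) < t + 1) =
          insert ⟨t, htlt⟩ G := by
        ext x
        simp only [Finset.mem_filter, Finset.mem_univ, true_and, Finset.mem_insert,
          hmemG, Fin.ext_iff]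
        omega
      have hnotin : (⟨t, htlt⟩ : Fin n) ∉ G := by simp [hmemG]
      have hsum' : ∑ i ∈ Finset.univ.filter (fun i : Fin n => (i : ℕ) < t + 1), w i
          = w ⟨t, htlt⟩ + wS G := by
        rw [hins, Finset.sum_insert hnotin]
      have := htmax (t + 1) (by omega) (by rw [hsum']; omega)
      omega
    have hXG2 : (X \ B) ∪ A = G := by
      ext x
      simp only [Finset.mem_union, Finset.mem_sdiff, hAdef, hBdef]
      tauto
    have hw0 := hsum w A B (le_refl A) (le_refl B)
    rw [hXG2] at hw0
    have hwBA : wS B + 1 ≤ wS A + w ⟨t, htlt⟩ := by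
      have hXf := hXfeas
      simp only [hwSdef] at hXf hstep ⊢
      omega
    have hwtt : w ⟨t, htlt⟩ ≤ wmax := hw2 _
    have hBC : (2 * wmax + 1) * c ≤ wS B := by
      calc (2 * wmax + 1) * c ≤ (B.filter (fun j => w j = c)).card * c :=
            Nat.mul_le_mul_right c (by omega)
        _ = wS (B.filter (fun j => w j = c)) :=
            (hclassw c _ B (le_refl _)).symm
        _ ≤ wS B := Finset.sum_le_sum_of_subset (Finset.filter_subset _ _)
    by_cases hcase : wS A ≤ (wmax + 1) * c
    · have hdist : (2 * wmax + 1) * c = (wmax + 1) * c + wmax * c := by ring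
      have hmul : wmax ≤ wmax * c := Nat.le_mul_of_pos_right _ (by omega)
      omega
    · push_neg at hcase
      obtain ⟨A'', hA''A, q, hq1, hq2, hA''w⟩ :=
        equal_pair hwmax w hw2 A c hc (le_of_lt hcase)
      obtain ⟨B'', hB''sub, hB''card⟩ :=
        Finset.exists_subset_card_eq
          (show q ≤ (B.filter (fun j => w j = c)).card by omega)
      have hB''w : wS B'' = q * c := by
        rw [hclassw c B'' B hB''sub, hB''card]
      have hA''c : 1 ≤ A''.card := by
        by_contra hz
        push_neg at hz
        have : A'' = ∅ := Finset.card_eq_zero.mp (by omega)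
        rw [this] at hA''w
        simp at hA''w
        omega
      exact hS1 A'' B'' hA''A (subset_trans hB''sub (Finset.filter_subset _ _))
        (by rw [hB''w]; exact hA''w) hA''c
  -- final assembly
  have hsum_ite : ∀ (v : Fin n → ℕ) (Z : Finset (Fin n)),
      ∑ i : Fin n, v i * (if i ∈ Z then 1 else 0) = ∑ i ∈ Z, v i := by
    intro v Z
    simp only [mul_ite, mul_one, mul_zero]
    rw [Finset.sum_ite_mem, Finset.univ_inter]
  refine ⟨fun i => if i ∈ X then 1 else 0, ?_, ?_, ?_, ?_⟩
  · intro i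
    by_cases h : i ∈ X <;> simp [h]
  · rw [hsum_ite w X]
    exact hXfeas
  · intro y hy01 hyW
    set Yf := Finset.univ.filter (fun i => y i = 1) with hYfdef
    have hy : ∀ i, y i = if i ∈ Yf then 1 else 0 := by
      intro i
      have := hy01 i
      by_cases h : y i = 1
      · simp [hYfdef, h]
      · have h0 : y i = 0 := by omega
        simp [hYfdef, h0]
    have h1 : ∑ i : Fin n, w i * y i = wS Yf := by
      rw [Finset.sum_congr rfl (fun i _ => by rw [hy i])]
      exact hsum_ite w Yf
    have h2 : ∑ i : Fin n, p i * y i = pS Yf := by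
      rw [Finset.sum_congr rfl (fun i _ => by rw [hy i])]
      exact hsum_ite p Yf
    rw [h2, hsum_ite p X]
    exact hopt Yf (by rw [← h1]; exact hyW)
  · intro i
    have hgset : (Finset.univ.filter fun j : Fin n => w j = w i ∧ g j = 1) =
        Finset.univ.filter (fun j : Fin n => w j = w i ∧ (j : ℕ) < t) := by
      ext j
      simp only [Finset.mem_filter, Finset.mem_univ, true_and, hg j]
      constructor
      · rintro ⟨hw', hgj⟩
        refine ⟨hw', ?_⟩
        by_contra hjt
        rw [if_neg hjt] at hgj
        omega
      · rintro ⟨hw', hjt⟩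
        rw [if_pos hjt]
        exact ⟨hw', rfl⟩
    rw [hgset]
    set rankset := Finset.univ.filter (fun j : Fin n => w j = w i ∧ j ≤ i) with hrankdef
    set pickset := Finset.univ.filter (fun j : Fin n => w j = w i ∧ (j : ℕ) < t) with hpickdef
    constructor
    · intro hcond
      suffices hiX : i ∈ X by simp [hiX]
      by_contra hiX
      have hsplit := Finset.card_filter_add_card_filter_not
        (s := pickset) (p := fun j => j ∈ X)
      have hsub1 : pickset.filter (fun j => j ∉ X) ⊆ A.filter (fun j => w j = w i) := by
        intro j hj
        simp only [Finset.mem_filter, Finset.mem_univ, true_and, hpickdef] at hj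
        simp only [Finset.mem_filter, hmemA]
        exact ⟨⟨hj.1.2, hj.2⟩, hj.1.1⟩
      have hc1 : (pickset.filter (fun j => j ∉ X)).card ≤ wmax :=
        le_trans (Finset.card_le_card hsub1) (hL3 (w i) (hw1 i))
      have hsub2 : pickset.filter (fun j => j ∈ X) ⊆ rankset.erase i := by
        intro j hj
        simp only [Finset.mem_filter, Finset.mem_univ, true_and, hpickdef] at hj
        have hjne : j ≠ i := fun h => hiX (h ▸ hj.2)
        have hji : j ≤ i := by
          rcases le_or_gt j i with h | h
          · exact h
          · exact absurd (hpre i j hj.1.1.symm (le_of_lt h) hj.2) hiX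
        simp only [Finset.mem_erase, Finset.mem_filter, Finset.mem_univ, true_and,
          hrankdef]
        exact ⟨hjne, hj.1.1, hji⟩
      have hirank : i ∈ rankset := by
        simp [hrankdef]
      have hcer : (rankset.erase i).card = rankset.card - 1 :=
        Finset.card_erase_of_mem hirank
      have hrpos : 1 ≤ rankset.card := Finset.card_pos.mpr ⟨i, hirank⟩
      have hc2 := Finset.card_le_card hsub2
      omega
    · intro hcond
      suffices hiX : i ∉ X by simp [hiX]
      intro hiX
      have hsub : rankset ⊆ pickset ∪ (B.filter (fun j => w j = w i)) := by
        intro j hj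
        simp only [Finset.mem_filter, Finset.mem_univ, true_and, hrankdef] at hj
        have hjX : j ∈ X := hpre j i hj.1 hj.2 hiX
        by_cases hjt : (j : ℕ) < t
        · exact Finset.mem_union_left _ (by simp [hpickdef, hj.1, hjt])
        · refine Finset.mem_union_right _ ?_
          simp only [Finset.mem_filter, hmemB]
          exact ⟨⟨hjX, by omega⟩, hj.1⟩
      have h1 := Finset.card_le_card hsub
      have h2 := Finset.card_union_le pickset (B.filter (fun j => w j = w i))
      have h3 := hL4 (w i) (hw1 i)
      omega
end

section
/- Consider a 0-1-Knapsack instance with non-increasing profit-to-weight ratios whose weights satisfy w_i ≤ w_max for all i, and let g be its maximal prefix solution. Then there exists an optimal solution x* such that Σ_{i=1}^n w_i·|g_i − x*_i| ≤ w_max·(2·w_max − 1). -/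
namespace S16
open Finset

variable {n : ℕ}

def msum (f : Fin n → ℕ) (S : Finset (Fin n)) : ℕ := ∑ i ∈ S, f i

def pre (f : Fin n → ℕ) (A : Finset (Fin n)) (k : ℕ) : ℕ :=
  msum f (A.filter fun j => (j : ℕ) < k)

lemma msum_union {f : Fin n → ℕ} {S T : Finset (Fin n)} (h : Disjoint S T) :
    msum f (S ∪ T) = msum f S + msum f T := Finset.sum_union h

lemma msum_sdiff {f : Fin n → ℕ} {S T : Finset (Fin n)} (h : T ⊆ S) :
    msum f (S \ T) + msum f T = msum f S := Finset.sum_sdiff h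

lemma msum_le_card {f : Fin n → ℕ} {c : ℕ} (hf : ∀ i, f i ≤ c) (A : Finset (Fin n)) :
    msum f A ≤ c * A.card := by
  calc msum f A ≤ ∑ _i ∈ A, c := Finset.sum_le_sum fun i _ => hf i
  _ = c * A.card := by rw [Finset.sum_const, smul_eq_mul, mul_comm]

lemma pre_zero (f : Fin n → ℕ) (A : Finset (Fin n)) : pre f A 0 = 0 := by
  simp [pre, msum]

lemma pre_mono (f : Fin n → ℕ) (A : Finset (Fin n)) {k k' : ℕ} (h : k ≤ k') :
    pre f A k ≤ pre f A k' := by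
  apply Finset.sum_le_sum_of_subset
  intro j hj
  simp only [mem_filter] at *
  exact ⟨hj.1, lt_of_lt_of_le hj.2 h⟩

lemma pre_split (f : Fin n → ℕ) (A : Finset (Fin n)) {k k' : ℕ} (h : k ≤ k') :
    pre f A k' = pre f A k + msum f (A.filter fun j => k ≤ (j : ℕ) ∧ (j : ℕ) < k') := by
  unfold pre msum
  rw [← Finset.sum_union]
  · congr 1
    ext j
    by_cases hj : j ∈ A <;> simp [hj] <;> omega
  · rw [Finset.disjoint_left]
    intro j hj hj'
    simp only [mem_filter] at hj hj'
    omega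

lemma pre_top (f : Fin n → ℕ) (A : Finset (Fin n)) : pre f A n = msum f A := by
  unfold pre
  rw [Finset.filter_true_of_mem fun j _ => j.isLt]

lemma pre_step_le {f : Fin n → ℕ} {c : ℕ} (hf : ∀ i, f i ≤ c) (A : Finset (Fin n)) (k : ℕ) :
    pre f A (k + 1) ≤ pre f A k + c := by
  rw [pre_split f A (show k ≤ k + 1 by omega)]
  have h1 : (A.filter fun j : Fin n => k ≤ (j : ℕ) ∧ (j : ℕ) < k + 1).card ≤ 1 := by
    rw [Finset.card_le_one]
    intro a ha b hb
    simp only [mem_filter] at ha hb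
    exact Fin.ext (by omega)
  have h2 := msum_le_card hf (A.filter fun j : Fin n => k ≤ (j : ℕ) ∧ (j : ℕ) < k + 1)
  have h3 : c * (A.filter fun j : Fin n => k ≤ (j : ℕ) ∧ (j : ℕ) < k + 1).card ≤ c := by
    calc c * (A.filter fun j : Fin n => k ≤ (j : ℕ) ∧ (j : ℕ) < k + 1).card ≤ c * 1 :=
          Nat.mul_le_mul_left c h1
    _ = c := mul_one c
  omega

lemma pre_step_mem (f : Fin n → ℕ) {A : Finset (Fin n)} {i : Fin n} (hi : i ∈ A) :
    pre f A ((i : ℕ) + 1) = pre f A (i : ℕ) + f i := by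
  rw [pre_split f A (show (i:ℕ) ≤ (i:ℕ) + 1 by omega)]
  congr 1
  have : A.filter (fun j : Fin n => (i : ℕ) ≤ (j : ℕ) ∧ (j : ℕ) < (i : ℕ) + 1) = {i} := by
    ext j
    simp only [mem_filter, mem_singleton]
    constructor
    · rintro ⟨_, h1, h2⟩; exact Fin.ext (by omega)
    · rintro rfl; exact ⟨hi, le_refl _, Nat.lt_succ_self _⟩
  rw [this]
  simp [msum]

lemma psum_le_psum (w p : Fin n → ℕ) (A' B' : Finset (Fin n)) (hw1 : ∀ i, 1 ≤ w i)
    (hr : ∀ i ∈ A', ∀ j ∈ B', p j * w i ≤ p i * w j)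
    (hle : msum w B' ≤ msum w A') : msum p B' ≤ msum p A' := by
  rcases Nat.eq_zero_or_pos (msum w B') with h0 | hpos
  · have hB : B' = ∅ := by
      by_contra hne
      obtain ⟨j, hj⟩ := Finset.nonempty_iff_ne_empty.mpr hne
      have h1 : w j = 0 := by
        have := Finset.sum_eq_zero_iff.mp h0 j hj
        exact this
      have := hw1 j; omega
    simp [hB, msum]
  · have key : msum p B' * msum w A' ≤ msum p A' * msum w B' := by
      unfold msum
      rw [Finset.sum_mul_sum, Finset.sum_mul_sum]
      rw [Finset.sum_comm]
      exact Finset.sum_le_sum fun i hi => Finset.sum_le_sum fun j hj => hr i hi j hj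
    have h2 : msum p B' * msum w B' ≤ msum p A' * msum w B' :=
      le_trans (Nat.mul_le_mul_left _ hle) key
    exact Nat.le_of_mul_le_mul_right h2 hpos

end S16

set_option maxHeartbeats 1000000

open Finset

/-- weighted classic proximity bound, second part of (CP).
Consider a 0-1-Knapsack instance with non-increasing profit-to-weight ratios
(`p i * w j ≥ p j * w i` for `i ≤ j`) whose weights satisfy `1 ≤ w i ≤ wmax`, and let `g`
be its maximal prefix solution. Then there exists an optimal solution `x` with
`Σ_i w i · |g i − x i| ≤ wmax·(2·wmax − 1)`. -/
theorem stmt16 (n : ℕ) (hn : 1 ≤ n) (wmax : ℕ) (w p : Fin n → ℕ) (W : ℕ)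
    (hw1 : ∀ i, 1 ≤ w i) (hw2 : ∀ i, w i ≤ wmax) (hp : ∀ i, 1 ≤ p i)
    (hratio : ∀ i j : Fin n, i ≤ j → p i * w j ≥ p j * w i)
    (t : ℕ) (ht : t ≤ n)
    (htfeas : ∑ i ∈ Finset.univ.filter (fun i : Fin n => (i : ℕ) < t), w i ≤ W)
    (htmax : ∀ t' ≤ n,
      (∑ i ∈ Finset.univ.filter (fun i : Fin n => (i : ℕ) < t'), w i ≤ W) → t' ≤ t)
    (g : Fin n → ℕ) (hg : ∀ i : Fin n, g i = if (i : ℕ) < t then 1 else 0) :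
    ∃ x : Fin n → ℕ, (∀ i, x i ≤ 1) ∧ (∑ i, w i * x i ≤ W) ∧
      (∀ y : Fin n → ℕ, (∀ i, y i ≤ 1) → ∑ i, w i * y i ≤ W →
        ∑ i, p i * y i ≤ ∑ i, p i * x i) ∧
      (∑ i, (w i : ℤ) * |(g i : ℤ) - (x i : ℤ)|) ≤ (wmax : ℤ) * (2 * (wmax : ℤ) - 1) := by
  classical
  have hwmax1 : 1 ≤ wmax := le_trans (hw1 ⟨0, hn⟩) (hw2 ⟨0, hn⟩)
  set G : Finset (Fin n) := Finset.univ.filter (fun i : Fin n => (i : ℕ) < t) with hG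
  have hGW : S16.msum w G ≤ W := htfeas
  -- choose an optimal solution S of minimal distance to G
  obtain ⟨S₀, hS₀mem, hS₀max⟩ :=
    Finset.exists_max_image
      ((Finset.univ : Finset (Finset (Fin n))).filter fun T => S16.msum w T ≤ W)
      (S16.msum p) ⟨∅, Finset.mem_filter.mpr ⟨Finset.mem_univ _, by simp [S16.msum]⟩⟩
  obtain ⟨S, hSmem, hSmin⟩ :=
    Finset.exists_min_image
      (((Finset.univ : Finset (Finset (Fin n))).filter fun T => S16.msum w T ≤ W).filter
        fun T => S16.msum p S₀ ≤ S16.msum p T)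
      (fun T => S16.msum w (G \ T) + S16.msum w (T \ G))
      ⟨S₀, by simp only [Finset.mem_filter]; exact ⟨(Finset.mem_filter.mp hS₀mem), le_refl _⟩⟩
  simp only [Finset.mem_filter, Finset.mem_univ, true_and] at hSmem hS₀mem
  have hSW : S16.msum w S ≤ W := hSmem.1
  have hSopt : ∀ T : Finset (Fin n), S16.msum w T ≤ W → S16.msum p T ≤ S16.msum p S := by
    intro T hT
    have h1 := hS₀max T (by simp only [Finset.mem_filter, Finset.mem_univ, true_and]; exact hT)
    exact le_trans h1 hSmem.2
  have hSmin' : ∀ T : Finset (Fin n), S16.msum w T ≤ W → S16.msum p S ≤ S16.msum p T →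
      S16.msum w (G \ S) + S16.msum w (S \ G) ≤ S16.msum w (G \ T) + S16.msum w (T \ G) := by
    intro T hT hpT
    exact hSmin T (by
      simp only [Finset.mem_filter, Finset.mem_univ, true_and]
      exact ⟨hT, le_trans hSmem.2 hpT⟩)
  set A : Finset (Fin n) := G \ S with hA
  set B : Finset (Fin n) := S \ G with hB
  have hAt : ∀ i ∈ A, (i : ℕ) < t := by
    intro i hi
    have := (Finset.mem_sdiff.mp hi).1
    rw [hG] at this
    simpa using this
  have hBt : ∀ j ∈ B, t ≤ (j : ℕ) := by
    intro j hj
    have := (Finset.mem_sdiff.mp hj).2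
    rw [hG] at this
    simp at this
    omega
  have hsum : S16.msum w S + S16.msum w A = S16.msum w G + S16.msum w B := by
    have h1 := Finset.sum_inter_add_sum_sdiff G S w
    have h2 := Finset.sum_inter_add_sum_sdiff S G w
    have h3 : G ∩ S = S ∩ G := Finset.inter_comm G S
    simp only [S16.msum, hA, hB]
    rw [← h1, ← h2, h3]
    ring
  -- THE EXCHANGE LEMMA
  have exch : ∀ A' B' : Finset (Fin n), A' ⊆ A → B' ⊆ B → A'.Nonempty →
      S16.msum w B' ≤ S16.msum w A' →
      S16.msum w S + S16.msum w A' ≤ W + S16.msum w B' → False := by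
    intro A' B' hA' hB' hne hwle hfeas
    have hA'G : ∀ x ∈ A', x ∈ G ∧ x ∉ S := by
      intro x hx
      have := Finset.mem_sdiff.mp (hA' hx)
      exact this
    have hB'S : B' ⊆ S := hB'.trans Finset.sdiff_subset
    have hB'G : ∀ x ∈ B', x ∉ G := by
      intro x hx
      exact (Finset.mem_sdiff.mp (hB' hx)).2
    set T : Finset (Fin n) := (S \ B') ∪ A' with hT
    have hd : Disjoint (S \ B') A' := by
      rw [Finset.disjoint_left]
      intro x hx hxA
      exact (hA'G x hxA).2 (Finset.mem_sdiff.mp hx).1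
    have hwT : S16.msum w T + S16.msum w B' = S16.msum w S + S16.msum w A' := by
      rw [hT, S16.msum_union hd]
      have := S16.msum_sdiff (f := w) hB'S
      omega
    have hpT : S16.msum p T + S16.msum p B' = S16.msum p S + S16.msum p A' := by
      rw [hT, S16.msum_union hd]
      have := S16.msum_sdiff (f := p) hB'S
      omega
    have hTfeas : S16.msum w T ≤ W := by omega
    have hple : S16.msum p B' ≤ S16.msum p A' := by
      apply S16.psum_le_psum w p A' B' hw1 _ hwle
      intro i hi j hj
      apply hratio
      have h1 : (i : ℕ) < t := hAt i (hA' hi)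
      have h2 : t ≤ (j : ℕ) := hBt j (hB' hj)
      exact Fin.mk_le_mk.mpr (by omega)
    have hpsT : S16.msum p S ≤ S16.msum p T := by omega
    have hATeq : G \ T = A \ A' := by
      ext x
      simp only [hT, hA, Finset.mem_sdiff, Finset.mem_union]
      constructor
      · rintro ⟨hxG, hx2⟩
        push_neg at hx2
        obtain ⟨hx3, hx4⟩ := hx2
        refine ⟨⟨hxG, fun hxS => ?_⟩, hx4⟩
        exact hB'G x (hx3 hxS) hxG
      · rintro ⟨⟨hxG, hxS⟩, hx4⟩
        refine ⟨hxG, ?_⟩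
        push_neg
        exact ⟨fun hxS' => absurd hxS' hxS, hx4⟩
    have hBTeq : T \ G = B \ B' := by
      ext x
      simp only [hT, hB, Finset.mem_sdiff, Finset.mem_union]
      constructor
      · rintro ⟨hx1, hxG⟩
        rcases hx1 with ⟨hxS, hxB'⟩ | hxA'
        · exact ⟨⟨hxS, hxG⟩, hxB'⟩
        · exact absurd (hA'G x hxA').1 hxG
      · rintro ⟨⟨hxS, hxG⟩, hxB'⟩
        exact ⟨Or.inl ⟨hxS, hxB'⟩, hxG⟩
    have hdistT := hSmin' T hTfeas hpsT
    rw [hATeq, hBTeq] at hdistT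
    have e1 : S16.msum w (A \ A') + S16.msum w A' = S16.msum w A := S16.msum_sdiff hA'
    have e2 : S16.msum w (B \ B') + S16.msum w B' = S16.msum w B := S16.msum_sdiff hB'
    have hpos : 1 ≤ S16.msum w A' := by
      obtain ⟨i, hi⟩ := hne
      calc 1 ≤ w i := hw1 i
      _ ≤ S16.msum w A' := Finset.single_le_sum (fun j _ => Nat.zero_le (w j)) hi
    omega
  -- THE COUNTING ARGUMENT
  have hF4 : B.Nonempty → W + 1 ≤ S16.msum w G + wmax := by
    intro hBne
    have htlt : t < n := by
      obtain ⟨j, hj⟩ := hBne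
      exact lt_of_le_of_lt (hBt j hj) j.isLt
    have h1 : ¬ (S16.pre w Finset.univ (t + 1) ≤ W) := by
      intro hc
      have h := htmax (t + 1) htlt (by simpa [S16.pre, S16.msum] using hc)
      omega
    have h2 : S16.pre w Finset.univ (t + 1) = S16.pre w Finset.univ t + w ⟨t, htlt⟩ := by
      simpa using S16.pre_step_mem w (A := Finset.univ) (i := ⟨t, htlt⟩) (Finset.mem_univ _)
    have h3 : S16.pre w Finset.univ t = S16.msum w G := by rw [hG]; rfl
    have h4 := hw2 ⟨t, htlt⟩
    omega
  have hfin : S16.msum w A + S16.msum w B + wmax ≤ 2 * wmax * wmax := by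
    by_cases hAne : A.Nonempty
    · have hslack : W + 1 ≤ S16.msum w S + wmax := by
        by_contra hcon
        push_neg at hcon
        obtain ⟨i, hi⟩ := hAne
        refine exch {i} ∅ (by simpa using hi) (Finset.empty_subset _)
          ⟨i, Finset.mem_singleton_self i⟩ (by simp [S16.msum]) ?_
        have h1 : S16.msum w {i} = w i := by simp [S16.msum]
        have h2 : S16.msum w (∅ : Finset (Fin n)) = 0 := by simp [S16.msum]
        have := hw2 i
        omega
      by_cases hBne : B.Nonempty
      · have hF4' := hF4 hBne
        -- the "just below v" prefix of B
        have hLex : ∀ v : ℕ, ∃ l : ℕ, S16.pre w B l ≤ v ∧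
            (v ≤ S16.msum w B → v + 1 ≤ S16.pre w B l + wmax) := by
          intro v
          obtain ⟨l, hlmem, hlmax⟩ := Finset.exists_max_image
            ((Finset.range (n + 1)).filter (fun k => S16.pre w B k ≤ v)) (fun k => k)
            ⟨0, Finset.mem_filter.mpr ⟨Finset.mem_range.mpr (by omega),
              by rw [S16.pre_zero]; omega⟩⟩
          rw [Finset.mem_filter, Finset.mem_range] at hlmem
          refine ⟨l, hlmem.2, fun hv => ?_⟩
          rcases Nat.lt_or_ge l n with hln | hln
          · have h2 : ¬ S16.pre w B (l + 1) ≤ v := by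
              intro hc
              have := hlmax (l + 1)
                (Finset.mem_filter.mpr ⟨Finset.mem_range.mpr (by omega), hc⟩)
              omega
            have h3 := S16.pre_step_le hw2 B l
            omega
          · have hlen : l = n := by omega
            have h4 : S16.pre w B l = S16.msum w B := by rw [hlen, S16.pre_top]
            omega
        choose L hL1 hL2 using hLex
        set K := A.filter (fun i : Fin n => S16.pre w A ((i : ℕ) + 1) ≤ S16.msum w B) with hK
        have hφmem : ∀ i ∈ K,
            S16.pre w A ((i : ℕ) + 1) - S16.pre w B (L (S16.pre w A ((i : ℕ) + 1)))
              ∈ Finset.Icc (W - S16.msum w S + 1) (wmax - 1) := by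
          intro i hi
          rw [hK, Finset.mem_filter] at hi
          obtain ⟨hiA, hile⟩ := hi
          have hb1 := hL1 (S16.pre w A ((i : ℕ) + 1))
          have hb2 := hL2 (S16.pre w A ((i : ℕ) + 1)) hile
          have hbr1 : S16.msum w (A.filter fun j : Fin n => (j : ℕ) < (i : ℕ) + 1)
              = S16.pre w A ((i : ℕ) + 1) := rfl
          have hbr2 : S16.msum w (B.filter fun j : Fin n =>
              (j : ℕ) < L (S16.pre w A ((i : ℕ) + 1)))
              = S16.pre w B (L (S16.pre w A ((i : ℕ) + 1))) := rfl
          have hnex : W + S16.pre w B (L (S16.pre w A ((i : ℕ) + 1))) + 1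
              ≤ S16.msum w S + S16.pre w A ((i : ℕ) + 1) := by
            by_contra hcon
            push_neg at hcon
            refine exch (A.filter (fun j : Fin n => (j : ℕ) < (i : ℕ) + 1))
              (B.filter (fun j : Fin n => (j : ℕ) < L (S16.pre w A ((i : ℕ) + 1))))
              (Finset.filter_subset _ _) (Finset.filter_subset _ _)
              ⟨i, Finset.mem_filter.mpr ⟨hiA, Nat.lt_succ_self _⟩⟩ ?_ ?_
            · omega
            · omega
          simp only [Finset.mem_Icc]
          omega
        have hφinj : ∀ i ∈ K, ∀ i' ∈ K, (i : ℕ) < (i' : ℕ) →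
            S16.pre w A ((i : ℕ) + 1) - S16.pre w B (L (S16.pre w A ((i : ℕ) + 1))) ≠
            S16.pre w A ((i' : ℕ) + 1) - S16.pre w B (L (S16.pre w A ((i' : ℕ) + 1))) := by
          intro i hi i' hi' hlt heq
          rw [hK, Finset.mem_filter] at hi hi'
          obtain ⟨hiA, hile⟩ := hi
          obtain ⟨hi'A, hi'le⟩ := hi'
          have hb1 := hL1 (S16.pre w A ((i : ℕ) + 1))
          have hb1' := hL1 (S16.pre w A ((i' : ℕ) + 1))
          have hvv' : S16.pre w A ((i : ℕ) + 1) + w i' ≤ S16.pre w A ((i' : ℕ) + 1) := by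
            have hm : S16.pre w A ((i : ℕ) + 1) ≤ S16.pre w A (i' : ℕ) :=
              S16.pre_mono w A (by omega)
            have hs := S16.pre_step_mem w hi'A
            omega
          have hwi' := hw1 i'
          have hLL : L (S16.pre w A ((i : ℕ) + 1)) < L (S16.pre w A ((i' : ℕ) + 1)) := by
            by_contra hcon
            push_neg at hcon
            have := S16.pre_mono w B hcon
            omega
          have hsplitA := S16.pre_split w A (show (i : ℕ) + 1 ≤ (i' : ℕ) + 1 by omega)
          have hsplitB := S16.pre_split w B (le_of_lt hLL)
          refine exch
            (A.filter (fun j : Fin n => (i : ℕ) + 1 ≤ (j : ℕ) ∧ (j : ℕ) < (i' : ℕ) + 1))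
            (B.filter (fun j : Fin n => L (S16.pre w A ((i : ℕ) + 1)) ≤ (j : ℕ) ∧
              (j : ℕ) < L (S16.pre w A ((i' : ℕ) + 1))))
            (Finset.filter_subset _ _) (Finset.filter_subset _ _)
            ⟨i', Finset.mem_filter.mpr ⟨hi'A, by omega⟩⟩ ?_ ?_
          · omega
          · omega
        have hKcard : K.card + (W - S16.msum w S) ≤ wmax - 1 := by
          have hcard := Finset.card_le_card_of_injOn
            (fun i : Fin n =>
              S16.pre w A ((i : ℕ) + 1) - S16.pre w B (L (S16.pre w A ((i : ℕ) + 1))))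
            hφmem ?_
          · rw [Nat.card_Icc] at hcard
            omega
          · intro i hi i' hi' heq
            by_contra hne
            have hne' : (i : ℕ) ≠ (i' : ℕ) := fun hc => hne (Fin.ext hc)
            rcases Nat.lt_or_ge (i : ℕ) (i' : ℕ) with h | h
            · exact hφinj i (Finset.mem_coe.mp hi) i' (Finset.mem_coe.mp hi') h heq
            · exact hφinj i' (Finset.mem_coe.mp hi') i (Finset.mem_coe.mp hi)
                (by omega) heq.symm
        rcases le_or_gt (S16.msum w A) (S16.msum w B) with hab | hba
        · have hKA : K = A := by
            rw [hK]
            apply Finset.filter_true_of_mem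
            intro i hi
            calc S16.pre w A ((i : ℕ) + 1) ≤ S16.pre w A n := S16.pre_mono w A (by omega)
            _ = S16.msum w A := S16.pre_top w A
            _ ≤ S16.msum w B := hab
          have hcardA : S16.msum w A ≤ wmax * A.card := S16.msum_le_card hw2 A
          have hAcard : A.card + 1 ≤ wmax := by rw [← hKA]; omega
          have hmul : wmax * A.card + wmax ≤ wmax * wmax := by
            calc wmax * A.card + wmax = wmax * (A.card + 1) := by ring
            _ ≤ wmax * wmax := Nat.mul_le_mul_left wmax hAcard
          have hb : S16.msum w B + 1 ≤ S16.msum w A + wmax := by omega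
          nlinarith [hmul, hcardA, hb]
        · have hs1 : S16.msum w S + 1 ≤ W := by omega
          have hA2ne : (A.filter
              (fun i : Fin n => ¬ S16.pre w A ((i : ℕ) + 1) ≤ S16.msum w B)).Nonempty := by
            obtain ⟨imax, himaxA, himax⟩ := Finset.exists_max_image A (fun j => (j : ℕ)) hAne
            refine ⟨imax, Finset.mem_filter.mpr ⟨himaxA, ?_⟩⟩
            have hfull : A.filter (fun j : Fin n => (j : ℕ) < (imax : ℕ) + 1) = A :=
              Finset.filter_true_of_mem (fun j hj => by have := himax j hj; omega)
            have h5 : S16.pre w A ((imax : ℕ) + 1) = S16.msum w A := by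
              rw [S16.pre, hfull]
            omega
          obtain ⟨istar, histarmem, histarmin⟩ := Finset.exists_min_image
            (A.filter (fun i : Fin n => ¬ S16.pre w A ((i : ℕ) + 1) ≤ S16.msum w B))
            (fun j => (j : ℕ)) hA2ne
          rw [Finset.mem_filter] at histarmem
          have hKeq : K = A.filter (fun j : Fin n => (j : ℕ) < (istar : ℕ)) := by
            rw [hK]; ext j
            simp only [Finset.mem_filter]
            constructor
            · rintro ⟨hjA, hj2⟩
              refine ⟨hjA, ?_⟩
              by_contra hcon
              push_neg at hcon
              have := S16.pre_mono w A (show (istar : ℕ) + 1 ≤ (j : ℕ) + 1 by omega)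
              exact histarmem.2 (le_trans this hj2)
            · rintro ⟨hjA, hj2⟩
              refine ⟨hjA, ?_⟩
              by_contra hcon
              have := histarmin j (Finset.mem_filter.mpr ⟨hjA, hcon⟩)
              omega
          have hwK : S16.msum w K = S16.pre w A (istar : ℕ) := by rw [hKeq]; rfl
          have hstep := S16.pre_step_mem w histarmem.1
          have hbig : S16.msum w B + 1 ≤ S16.pre w A ((istar : ℕ) + 1) := by
            have := histarmem.2; omega
          have hcardK := S16.msum_le_card hw2 K
          have hKc2 : K.card + 2 ≤ wmax := by omega
          have hmul2 : wmax * K.card + 2 * wmax ≤ wmax * wmax := by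
            calc wmax * K.card + 2 * wmax = wmax * (K.card + 2) := by ring
            _ ≤ wmax * wmax := Nat.mul_le_mul_left wmax hKc2
          have hwistar := hw2 istar
          have ha2 : S16.msum w A + 1 ≤ S16.msum w B + wmax := by omega
          have hbb2 : S16.msum w B + 1 ≤ wmax * K.card + wmax := by omega
          nlinarith [hmul2, ha2, hbb2]
      · have hBe : B = ∅ := Finset.not_nonempty_iff_eq_empty.mp hBne
        have hb0 : S16.msum w B = 0 := by rw [hBe]; simp [S16.msum]
        have ha : S16.msum w A + 1 ≤ wmax := by omega
        nlinarith [ha, hwmax1]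
    · have hAe : A = ∅ := Finset.not_nonempty_iff_eq_empty.mp hAne
      have ha0 : S16.msum w A = 0 := by rw [hAe]; simp [S16.msum]
      by_cases hBne : B.Nonempty
      · have hF4' := hF4 hBne
        have hb : S16.msum w B + 1 ≤ wmax := by omega
        nlinarith [hb, hwmax1]
      · have hBe : B = ∅ := Finset.not_nonempty_iff_eq_empty.mp hBne
        have hb0 : S16.msum w B = 0 := by rw [hBe]; simp [S16.msum]
        nlinarith [hwmax1]
  -- CONSTRUCTION OF THE WITNESS
  have hwS : (∑ i, w i * (if i ∈ S then 1 else 0)) = S16.msum w S := by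
    rw [S16.msum]
    calc ∑ i, w i * (if i ∈ S then 1 else 0)
        = ∑ i, (if i ∈ S then w i else 0) := by
          apply Finset.sum_congr rfl
          intro i _
          split <;> ring
    _ = ∑ i ∈ S, w i := by rw [Finset.sum_ite_mem, Finset.univ_inter]
  have hpS : (∑ i, p i * (if i ∈ S then 1 else 0)) = S16.msum p S := by
    rw [S16.msum]
    calc ∑ i, p i * (if i ∈ S then 1 else 0)
        = ∑ i, (if i ∈ S then p i else 0) := by
          apply Finset.sum_congr rfl
          intro i _
          split <;> ring
    _ = ∑ i ∈ S, p i := by rw [Finset.sum_ite_mem, Finset.univ_inter]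
  refine ⟨fun i => if i ∈ S then 1 else 0, fun i => by dsimp; split <;> omega, ?_, ?_, ?_⟩
  · rw [hwS]; exact hSW
  · intro y hy hyW
    set T := Finset.univ.filter (fun i => y i = 1) with hT
    have hyT : ∀ i, y i = if i ∈ T then 1 else 0 := by
      intro i
      by_cases h : y i = 1
      · simp [hT, h]
      · have h0 : y i = 0 := by have := hy i; omega
        simp [hT, h, h0]
    have hwy : (∑ i, w i * y i) = S16.msum w T := by
      rw [S16.msum]
      calc ∑ i, w i * y i = ∑ i, (if i ∈ T then w i else 0) := by
            apply Finset.sum_congr rfl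
            intro i _
            rw [hyT i]
            split <;> ring
      _ = ∑ i ∈ T, w i := by rw [Finset.sum_ite_mem, Finset.univ_inter]
    have hpy : (∑ i, p i * y i) = S16.msum p T := by
      rw [S16.msum]
      calc ∑ i, p i * y i = ∑ i, (if i ∈ T then p i else 0) := by
            apply Finset.sum_congr rfl
            intro i _
            rw [hyT i]
            split <;> ring
      _ = ∑ i ∈ T, p i := by rw [Finset.sum_ite_mem, Finset.univ_inter]
    rw [hpy, hpS]
    exact hSopt T (by rw [← hwy]; exact hyW)
  · have hdisj : Disjoint A B := by
      rw [Finset.disjoint_left]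
      intro x hx hx'
      exact (Finset.mem_sdiff.mp hx').2 (Finset.mem_sdiff.mp hx).1
    have hptwise : ∀ i : Fin n,
        (w i : ℤ) * |(g i : ℤ) - (((if i ∈ S then 1 else 0) : ℕ) : ℤ)|
          = (if i ∈ A ∪ B then (w i : ℤ) else 0) := by
      intro i
      rw [hg i]
      by_cases h1 : (i : ℕ) < t <;> by_cases h2 : i ∈ S <;>
        simp [h1, h2, hA, hB, hG, Finset.mem_union, Finset.mem_sdiff, Finset.mem_filter]
    have hcast : (∑ i, (w i : ℤ) * |(g i : ℤ) - (((if i ∈ S then 1 else 0) : ℕ) : ℤ)|)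
        = ((S16.msum w A + S16.msum w B : ℕ) : ℤ) := by
      calc (∑ i, (w i : ℤ) * |(g i : ℤ) - (((if i ∈ S then 1 else 0) : ℕ) : ℤ)|)
          = ∑ i, (if i ∈ A ∪ B then (w i : ℤ) else 0) :=
            Finset.sum_congr rfl fun i _ => hptwise i
      _ = ∑ i ∈ A ∪ B, (w i : ℤ) := by rw [Finset.sum_ite_mem, Finset.univ_inter]
      _ = ((S16.msum w (A ∪ B) : ℕ) : ℤ) := by rw [S16.msum]; push_cast; rfl
      _ = ((S16.msum w A + S16.msum w B : ℕ) : ℤ) := by rw [S16.msum_union hdisj]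
    rw [hcast]
    have hz : ((S16.msum w A : ℤ) + (S16.msum w B : ℤ)) + (wmax : ℤ)
        ≤ 2 * (wmax : ℤ) * (wmax : ℤ) := by exact_mod_cast hfin
    push_cast
    nlinarith [hz]
end
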